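/- arXiv:2310.13554 — 8 statements merged into one kernel-verified Lean document; each statement's English description precedes it below -/
import Mathlib

section
/- Let X be a finite metric space and D > 0. Then X admits a finite, 2D-bounded covering (B_i)_{i∈I} (each member has diameter at most 2D) such that for every x ∈ X, the number of indices i with B(x, D/2) ⊆ B_i, divided by the number of indices i with x ∈ B_i, is at least #B(x, D/2) / #B(x, 2D), where B(x,r) denotes the closed ball and # denotes cardinality. -/
/-!
Take the closed balls of radius `D` around all points. Every point of `B(x, D/2)` is the centre
of a ball containing `B(x, D/2)`, and every centre of a ball containing `x` lies in
`B(x, D) ⊆ B(x, 2D)`; comparing numerators and denominators gives the ratio bound.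
-/

open Metric Set

section
variable {X : Type*} [PseudoMetricSpace X]

lemma closedBall_half_subset_setOf_closedBall_subset (x : X) (r : ℝ) :
    closedBall x (r / 2) ⊆ {y | closedBall x (r / 2) ⊆ closedBall y r} := fun y hy =>
  closedBall_subset_closedBall' (by rw [mem_closedBall'] at hy; linarith)

lemma ncard_closedBall_half_div_le [Finite X] (x : X) {D : ℝ} (hD : 0 ≤ D) :
    ((closedBall x (D / 2)).ncard : ℝ) / (closedBall x (2 * D)).ncard ≤
      ({y | closedBall x (D / 2) ⊆ closedBall y D}.ncard : ℝ) / (closedBall x D).ncard := by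
  have hnum := ncard_le_ncard (closedBall_half_subset_setOf_closedBall_subset x D) (toFinite _)
  have hden := ncard_le_ncard (closedBall_subset_closedBall (by linarith : D ≤ 2 * D) :
    closedBall x D ⊆ closedBall x (2 * D)) (toFinite _)
  have hpos : 0 < (closedBall x D).ncard := (ncard_pos (toFinite _)).2 ⟨x, mem_closedBall_self hD⟩
  exact div_le_div₀ (by positivity) (by exact_mod_cast hnum) (by exact_mod_cast hpos)
    (by exact_mod_cast hden)

end

/-- Padded decompositions of finite metric spaces: a finite metric space admits a finite
`2D`-bounded covering such that for each `x`, the proportion of members containing the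
ball `B(x, D/2)` among the members containing `x` is at least `#B(x, D/2) / #B(x, 2D)`. -/
theorem finite_padded_covering {X : Type*} [MetricSpace X] [Fintype X]
    (D : ℝ) (hD : 0 < D) :
    ∃ (ι : Type) (_ : Fintype ι) (B : ι → Set X),
      (⋃ i, B i) = Set.univ ∧
      (∀ i, Metric.diam (B i) ≤ 2 * D) ∧
      ∀ x : X,
        ((Set.ncard (closedBall x (D / 2)) : ℝ) / (Set.ncard (closedBall x (2 * D)) : ℝ)) ≤
          ((Set.ncard {i | closedBall x (D / 2) ⊆ B i} : ℝ) /
            (Set.ncard {i | x ∈ B i} : ℝ)) := by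
  -- The index type must live in `Type`, so the balls are indexed by `Fin (card X)` rather than `X`.
  let e : Fin (Fintype.card X) ≃ X := (Fintype.equivFin X).symm
  have ncard_preimage (s : Set X) : (e ⁻¹' s).ncard = s.ncard :=
    ncard_preimage_of_injective_subset_range e.injective (by simp)
  refine ⟨_, inferInstance, fun i => closedBall (e i) D, ?_, fun i => diam_closedBall hD.le, ?_⟩
  · exact eq_univ_of_forall fun x => mem_iUnion.2 ⟨e.symm x, by simp [hD.le]⟩
  · intro x
    have hcenters : {i | x ∈ closedBall (e i) D} = e ⁻¹' closedBall x D :=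
      ext fun _ => mem_closedBall_comm
    have hpadded : {i | closedBall x (D / 2) ⊆ closedBall (e i) D} =
        e ⁻¹' {y | closedBall x (D / 2) ⊆ closedBall y D} := rfl
    rw [hcenters, hpadded, ncard_preimage, ncard_preimage]
    exact ncard_closedBall_half_div_le x hD.le
end

section
/- Let X be a metric space, A ⊆ X a subset, and U_1, …, U_m open subsets of X covering X \ A. Fix m' ≥ 3 so that at every point of X \ A at most m' of the sets U_i contain that point. Define ψ_i(x) = d(x, X \ U_i)^m with m = log(m'), ψ = Σψ_i, and φ_i = ψ_i/ψ on X \ A. Then for every x ∈ X \ A and every j with d(x, X \ U_j) ≥ t > 0, one has Σ_i Lip φ_i(x) ≤ 2·log(m')·(m')^{1/log(m')}/t ≤ 6·log(m')/t. -/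
open Filter Set Metric

/-!
Write `dᵢ = d(x, X ∖ Uᵢ)`, which is 1-Lipschitz, so that `Lip ψᵢ(x) ≤ m dᵢ^(m-1)`. The quotient
rule `Lip (f/g)(x) ≤ (|f x| Lip g(x) + |g x| Lip f(x)) / g(x)²` applied to `φᵢ = ψᵢ/ψ` gives
`Σᵢ Lip φᵢ(x) ≤ 2 Σᵢ Lip ψᵢ(x) / ψ(x) ≤ 2m Σᵢ dᵢ^(m-1) / Σᵢ dᵢ^m`. At most `m'` of the `dᵢ`
are nonzero, so Hölder's inequality gives `Σᵢ dᵢ^(m-1) ≤ m'^(1/m) (Σᵢ dᵢ^m)^(1-1/m)`, while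
`(Σᵢ dᵢ^m)^(1/m) ≥ dⱼ ≥ t`. Finally `m'^(1/log m') = e ≤ 3`.
-/

noncomputable def pointwiseLip {X : Type*} [MetricSpace X] (f : X → ℝ) (x : X) : ℝ :=
  Filter.limsup (fun x' => dist (f x) (f x') / dist x x') (nhdsWithin x {x}ᶜ)

open Finset Topology

section HasLipschitzBoundAt

variable {X : Type*} [MetricSpace X]

/-- A robust form of `pointwiseLip f x ≤ L` which, unlike a `limsup` in `ℝ`, needs no
boundedness side conditions and so behaves well under sums, quotients and composition. -/
def HasLipschitzBoundAt (f : X → ℝ) (x : X) (L : ℝ) : Prop :=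
  ∀ L' > L, ∀ᶠ y in 𝓝 x, |f y - f x| ≤ L' * dist y x

variable {f g : X → ℝ} {x : X} {L Lf Lg : ℝ}

theorem HasLipschitzBoundAt.of_tendsto {C : X → ℝ}
    (h : ∀ᶠ y in 𝓝 x, |f y - f x| ≤ C y * dist y x) (hC : Tendsto C (𝓝 x) (𝓝 L)) :
    HasLipschitzBoundAt f x L := fun L' hL' => by
  filter_upwards [h, hC.eventually (gt_mem_nhds hL')] with y hy hCy
  exact hy.trans (mul_le_mul_of_nonneg_right hCy.le dist_nonneg)

theorem HasLipschitzBoundAt.of_forall_pos {T : ℝ → ℝ}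
    (h : ∀ ε > 0, HasLipschitzBoundAt f x (T ε)) (hT : Tendsto T (𝓝[>] 0) (𝓝 L)) :
    HasLipschitzBoundAt f x L := fun L' hL' => by
  obtain ⟨ε, hTε, hε⟩ := ((hT.eventually (gt_mem_nhds hL')).and self_mem_nhdsWithin).exists
  exact h ε hε L' hTε

theorem LipschitzWith.hasLipschitzBoundAt {K : NNReal} (hf : LipschitzWith K f) :
    HasLipschitzBoundAt f x K :=
  .of_tendsto (.of_forall fun y => by simpa [Real.dist_eq] using hf.dist_le_mul y x)
    tendsto_const_nhds

theorem HasLipschitzBoundAt.continuousAt (hf : HasLipschitzBoundAt f x L) : ContinuousAt f x := by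
  have hdist : Tendsto (fun y => (L + 1) * dist y x) (𝓝 x) (𝓝 0) := by
    simpa using ((continuous_id.dist (continuous_const (y := x))).tendsto x).const_mul (L + 1)
  refine tendsto_iff_dist_tendsto_zero.2
    (squeeze_zero' (.of_forall fun _ => dist_nonneg) ?_ hdist)
  filter_upwards [hf (L + 1) (lt_add_one L)] with y hy
  rwa [Real.dist_eq]

theorem HasLipschitzBoundAt.add (hf : HasLipschitzBoundAt f x Lf)
    (hg : HasLipschitzBoundAt g x Lg) :
    HasLipschitzBoundAt (fun y => f y + g y) x (Lf + Lg) := fun L' hL' => by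
  obtain ⟨ε, hε, rfl⟩ : ∃ ε > 0, L' = Lf + Lg + 2 * ε :=
    ⟨(L' - (Lf + Lg)) / 2, by linarith, by ring⟩
  filter_upwards [hf (Lf + ε) (by linarith), hg (Lg + ε) (by linarith)] with y hfy hgy
  calc |f y + g y - (f x + g x)| ≤ |f y - f x| + |g y - g x| := by
        rw [add_sub_add_comm]; exact abs_add_le _ _
    _ ≤ (Lf + ε) * dist y x + (Lg + ε) * dist y x := add_le_add hfy hgy
    _ = (Lf + Lg + 2 * ε) * dist y x := by ring

theorem HasLipschitzBoundAt.sum {ι : Type*} {s : Finset ι} {f : ι → X → ℝ} {L : ι → ℝ}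
    (hf : ∀ i ∈ s, HasLipschitzBoundAt (f i) x (L i)) :
    HasLipschitzBoundAt (fun y => ∑ i ∈ s, f i y) x (∑ i ∈ s, L i) := by
  classical
  induction s using Finset.induction_on with
  | empty => exact fun L' hL' => .of_forall fun y => by simp [mul_nonneg hL'.le dist_nonneg]
  | insert i s hi ih =>
    simp only [Finset.sum_insert hi]
    exact (hf i (mem_insert_self i s)).add (ih fun j hj => hf j (mem_insert_of_mem hj))

theorem HasDerivAt.comp_hasLipschitzBoundAt {φ : ℝ → ℝ} {φ' : ℝ} (hφ : HasDerivAt φ φ' (g x))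
    (hg : HasLipschitzBoundAt g x L) : HasLipschitzBoundAt (fun y => φ (g y)) x (|φ'| * L) := by
  refine .of_forall_pos (T := fun ε => (|φ'| + ε) * (L + ε)) (fun ε hε => ?_) ?_
  · refine .of_tendsto ?_ tendsto_const_nhds
    have hφε := hg.continuousAt.eventually (hφ.isLittleO.bound hε)
    filter_upwards [hφε, hg (L + ε) (by linarith)] with y hφy hgy
    simp only [smul_eq_mul, Real.norm_eq_abs] at hφy
    calc |φ (g y) - φ (g x)| ≤ |φ'| * |g y - g x| + ε * |g y - g x| := by
          have := abs_sub_abs_le_abs_sub (φ (g y) - φ (g x)) ((g y - g x) * φ')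
          rw [abs_mul] at this
          linarith
      _ = (|φ'| + ε) * |g y - g x| := by ring
      _ ≤ (|φ'| + ε) * ((L + ε) * dist y x) := by gcongr
      _ = _ := by ring
  · exact ((by fun_prop : Continuous fun ε : ℝ => (|φ'| + ε) * (L + ε)).tendsto' 0 _
      (by simp)).mono_left nhdsWithin_le_nhds

theorem HasLipschitzBoundAt.div (hf : HasLipschitzBoundAt f x Lf)
    (hg : HasLipschitzBoundAt g x Lg) (hgx : g x ≠ 0) :
    HasLipschitzBoundAt (fun y => f y / g y) x ((|f x| * Lg + |g x| * Lf) / g x ^ 2) := by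
  refine .of_forall_pos (T := fun ε => (|f x| * (Lg + ε) + |g x| * (Lf + ε)) / g x ^ 2)
    (fun ε hε => ?_) ?_
  · have hC : Tendsto (fun y => (|f x| * (Lg + ε) + |g x| * (Lf + ε)) / (|g x| * |g y|)) (𝓝 x)
        (𝓝 ((|f x| * (Lg + ε) + |g x| * (Lf + ε)) / g x ^ 2)) := by
      rw [pow_two, ← abs_mul_abs_self]
      exact tendsto_const_nhds.div (tendsto_const_nhds.mul hg.continuousAt.abs)
        (by positivity)
    refine .of_tendsto ?_ hC
    filter_upwards [hf (Lf + ε) (by linarith), hg (Lg + ε) (by linarith),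
      hg.continuousAt.eventually_ne hgx] with y hfy hgy hgy0
    have hden : 0 < |g x| * |g y| := by positivity
    rw [div_sub_div _ _ hgy0 hgx, abs_div, abs_mul, mul_comm |g y|, div_mul_eq_mul_div,
      div_le_div_iff_of_pos_right hden]
    calc |f y * g x - g y * f x| = |g x * (f y - f x) - f x * (g y - g x)| := by ring_nf
      _ ≤ |g x| * |f y - f x| + |f x| * |g y - g x| := by
        rw [← abs_mul, ← abs_mul]; exact abs_sub _ _
      _ ≤ |g x| * ((Lf + ε) * dist y x) + |f x| * ((Lg + ε) * dist y x) := by gcongr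
      _ = _ := by ring
  · exact ((by fun_prop : Continuous fun ε : ℝ =>
      (|f x| * (Lg + ε) + |g x| * (Lf + ε)) / g x ^ 2).tendsto' 0 _ (by simp)).mono_left
      nhdsWithin_le_nhds

theorem HasLipschitzBoundAt.pointwiseLip_le (hf : HasLipschitzBoundAt f x L) (hL : 0 ≤ L) :
    pointwiseLip f x ≤ L := by
  rcases eq_or_neBot (𝓝[≠] x) with hbot | hne
  · simp [pointwiseLip, hbot, Filter.limsup_eq, hL]
  refine le_of_forall_gt_imp_ge_of_dense fun L' hL' => limsup_le_of_le
    (isCoboundedUnder_le_of_le _ fun y => div_nonneg dist_nonneg dist_nonneg) ?_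
  filter_upwards [nhdsWithin_le_nhds (hf L' hL'), self_mem_nhdsWithin] with y hy hyx
  rwa [div_le_iff₀ (dist_pos.2 (Ne.symm hyx)), dist_comm x, Real.dist_eq, abs_sub_comm]

theorem sum_pointwiseLip_div_sum_le {ι : Type*} [Fintype ι] {ψ : ι → X → ℝ} {L : ι → ℝ}
    (hψ : ∀ i, HasLipschitzBoundAt (ψ i) x (L i)) (hL : ∀ i, 0 ≤ L i) (hψx : ∀ i, 0 ≤ ψ i x)
    (hpos : 0 < ∑ i, ψ i x) :
    ∑ i, pointwiseLip (fun y => ψ i y / ∑ j, ψ j y) x ≤ 2 * (∑ i, L i) / ∑ i, ψ i x := by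
  set P := ∑ i, ψ i x
  have hsum : HasLipschitzBoundAt (fun y => ∑ j, ψ j y) x (∑ j, L j) :=
    .sum fun j _ => hψ j
  calc ∑ i, pointwiseLip (fun y => ψ i y / ∑ j, ψ j y) x
      ≤ ∑ i, (ψ i x * ∑ j, L j + P * L i) / P ^ 2 := by
        gcongr with i
        have hbound := (hψ i).div hsum hpos.ne'
        rw [abs_of_nonneg (hψx i), abs_of_pos hpos] at hbound
        exact hbound.pointwiseLip_le <| div_nonneg (add_nonneg
          (mul_nonneg (hψx i) (sum_nonneg fun j _ => hL j)) (mul_nonneg hpos.le (hL i)))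
          (sq_nonneg _)
    _ = 2 * (∑ i, L i) / P := by
        rw [← Finset.sum_div, Finset.sum_add_distrib, ← Finset.sum_mul, ← Finset.mul_sum]
        field_simp
        ring

end HasLipschitzBoundAt

theorem sum_rpow_sub_one_le_card_mul {ι : Type*} (s : Finset ι) {a : ι → ℝ}
    (ha : ∀ i ∈ s, 0 ≤ a i) {p : ℝ} (hp : 1 < p) :
    ∑ i ∈ s, a i ^ (p - 1) ≤
      (#{i ∈ s | a i ≠ 0} : ℝ) ^ p⁻¹ * (∑ i ∈ s, a i ^ p) ^ (1 - p⁻¹) := by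
  have hp0 : p - 1 ≠ 0 := by linarith
  have hdrop_zeros : ∀ q : ℝ, q ≠ 0 → ∑ i ∈ s with a i ≠ 0, a i ^ q = ∑ i ∈ s, a i ^ q :=
    fun q hq => sum_filter_of_ne fun i _ h hai => h (by rw [hai, Real.zero_rpow hq])
  have hholder := Real.inner_le_Lp_mul_Lq_of_nonneg {i ∈ s | a i ≠ 0}
    (.conjExponent hp) (f := fun _ => 1) (g := fun i => a i ^ (p - 1)) (fun _ _ => zero_le_one)
    (fun i hi => Real.rpow_nonneg (ha i (mem_filter.1 hi).1) _)
  have hconj : ∀ i ∈ s, (a i ^ (p - 1)) ^ p.conjExponent = a i ^ p := fun i hi => by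
    rw [← Real.rpow_mul (ha i hi), Real.conjExponent, mul_div_cancel₀ _ hp0]
  simp only [one_mul, Real.one_rpow, sum_const, nsmul_eq_mul, mul_one] at hholder
  rwa [sum_congr rfl fun i hi => hconj i (mem_filter.1 hi).1, Real.conjExponent, one_div_div,
    sub_div, div_self (by linarith), one_div, hdrop_zeros _ hp0, hdrop_zeros _ (by linarith)]
    at hholder

theorem sum_rpow_sub_one_div_sum_rpow_le {ι : Type*} (s : Finset ι) {a : ι → ℝ}
    (ha : ∀ i ∈ s, 0 ≤ a i) {p : ℝ} (hp : 1 < p) {N : ℕ} (hN : #{i ∈ s | a i ≠ 0} ≤ N)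
    {j : ι} (hj : j ∈ s) {t : ℝ} (ht : 0 < t) (htj : t ≤ a j) :
    (∑ i ∈ s, a i ^ (p - 1)) / ∑ i ∈ s, a i ^ p ≤ (N : ℝ) ^ p⁻¹ / t := by
  set P := ∑ i ∈ s, a i ^ p
  have htP : t ^ p ≤ P := (Real.rpow_le_rpow ht.le htj (by linarith)).trans
    (single_le_sum (fun i hi => Real.rpow_nonneg (ha i hi) p) hj)
  have hP : 0 < P := (Real.rpow_pos_of_pos ht p).trans_le htP
  have htP' : t ≤ P ^ p⁻¹ := by
    rw [← Real.rpow_rpow_inv ht.le (by linarith : p ≠ 0)]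
    gcongr
  calc (∑ i ∈ s, a i ^ (p - 1)) / P ≤ (N : ℝ) ^ p⁻¹ * P ^ (1 - p⁻¹) / P := by
        gcongr
        refine (sum_rpow_sub_one_le_card_mul s ha hp).trans ?_
        gcongr
    _ = (N : ℝ) ^ p⁻¹ / P ^ p⁻¹ := by
        rw [Real.rpow_sub hP, Real.rpow_one]
        field_simp
    _ ≤ (N : ℝ) ^ p⁻¹ / t := by gcongr

theorem one_lt_log_of_three_le {y : ℝ} (hy : 3 ≤ y) : 1 < Real.log y := by
  rw [Real.lt_log_iff_exp_lt (by linarith)]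
  linarith [Real.exp_one_lt_d9]

theorem partition_of_unity_pointwiseLip_bound_general {X : Type*} [MetricSpace X]
    (A : Set X) (k : ℕ) (U : Fin k → Set X)
    (m' : ℕ) (hm' : 3 ≤ m')
    (hmult : ∀ x ∉ A, ∀ S : Finset (Fin k), (∀ i ∈ S, x ∈ U i) → S.card ≤ m')
    (ψ : Fin k → X → ℝ)
    (hψ : ∀ i x, ψ i x = (Metric.infDist x (U i)ᶜ) ^ (Real.log m'))
    (φ : Fin k → X → ℝ)
    (hφ : ∀ i x, φ i x = ψ i x / ∑ j, ψ j x) :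
    ∀ x ∉ A, ∀ j : Fin k, ∀ t : ℝ, 0 < t → t ≤ Metric.infDist x (U j)ᶜ →
      (∑ i, pointwiseLip (φ i) x) ≤ 2 * Real.log m' * (m' : ℝ) ^ ((Real.log m')⁻¹) / t ∧
      2 * Real.log m' * (m' : ℝ) ^ ((Real.log m')⁻¹) / t ≤ 6 * Real.log m' / t := by
  intro x hx j t ht htj
  obtain rfl : φ = fun i y => ψ i y / ∑ j, ψ j y := funext₂ hφ
  obtain rfl : ψ = fun i y => infDist y (U i)ᶜ ^ Real.log m' := funext₂ hψ
  set m := Real.log m'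
  have hm'3 : (3 : ℝ) ≤ m' := by exact_mod_cast hm'
  have hm : 1 < m := one_lt_log_of_three_le hm'3
  set d := fun i => infDist x (U i)ᶜ
  have hd : ∀ i, 0 ≤ d i := fun i => infDist_nonneg
  have hψlip : ∀ i, HasLipschitzBoundAt (fun y => infDist y (U i)ᶜ ^ m) x
      (|m * d i ^ (m - 1)| * 1) := fun i =>
    (Real.hasDerivAt_rpow_const (Or.inr hm.le)).comp_hasLipschitzBoundAt
      (lipschitz_infDist_pt _).hasLipschitzBoundAt
  have hP : 0 < ∑ i, d i ^ m := (Real.rpow_pos_of_pos (ht.trans_le htj) m).trans_le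
    (single_le_sum (fun i _ => Real.rpow_nonneg (hd i) m) (mem_univ j))
  have hcard : #{i | d i ≠ 0} ≤ m' := hmult x hx _ fun i hi =>
    by_contra fun hxi => (mem_filter.1 hi).2 (infDist_zero_of_mem hxi)
  refine ⟨?_, ?_⟩
  · calc _ ≤ 2 * (∑ i, |m * d i ^ (m - 1)| * 1) / ∑ i, d i ^ m :=
          sum_pointwiseLip_div_sum_le (ψ := fun i y => infDist y (U i)ᶜ ^ m) hψlip
            (fun i => by positivity) (fun i => Real.rpow_nonneg (hd i) m) hP
      _ = 2 * m * ((∑ i, d i ^ (m - 1)) / ∑ i, d i ^ m) := by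
          simp_rw [mul_one, abs_of_nonneg (mul_nonneg (by linarith : (0 : ℝ) ≤ m)
            (Real.rpow_nonneg (hd _) _)), ← mul_sum]
          ring
      _ ≤ 2 * m * ((m' : ℝ) ^ m⁻¹ / t) := by
          gcongr 2 * m * ?_
          exact sum_rpow_sub_one_div_sum_rpow_le univ (fun i _ => hd i) hm hcard (mem_univ j)
            ht htj
      _ = _ := by ring
  · rw [Real.rpow_inv_log (by linarith) (by linarith)]
    calc 2 * m * Real.exp 1 / t ≤ 2 * m * 3 / t := by
          gcongr
          linarith [Real.exp_one_lt_d9]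
      _ = 6 * m / t := by ring

/-- Johnson–Lindenstrauss–Schechtman partitions of unity: with `ψᵢ(x) = d(x, X∖Uᵢ)^m`,
`m = log m'`, `ψ = Σψᵢ` and `φᵢ = ψᵢ/ψ`, if at most `m'` of the open sets `Uᵢ` contain any
given point of `X ∖ A` and `d(x, X∖Uⱼ) ≥ t > 0`, then
`Σᵢ Lip φᵢ(x) ≤ 2·log(m')·(m')^{1/log m'}/t ≤ 6·log(m')/t`. -/
theorem partition_of_unity_pointwiseLip_bound {X : Type*} [MetricSpace X]
    (A : Set X) (k : ℕ) (U : Fin k → Set X)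
    (hopen : ∀ i, IsOpen (U i)) (hcover : Aᶜ ⊆ ⋃ i, U i)
    (m' : ℕ) (hm' : 3 ≤ m')
    (hmult : ∀ x ∉ A, ∀ S : Finset (Fin k), (∀ i ∈ S, x ∈ U i) → S.card ≤ m')
    (ψ : Fin k → X → ℝ)
    (hψ : ∀ i x, ψ i x = (Metric.infDist x (U i)ᶜ) ^ (Real.log m'))
    (φ : Fin k → X → ℝ)
    (hφ : ∀ i x, φ i x = ψ i x / ∑ j, ψ j x) :
    ∀ x ∉ A, ∀ j : Fin k, ∀ t : ℝ, 0 < t → t ≤ Metric.infDist x (U j)ᶜ →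
      (∑ i, pointwiseLip (φ i) x) ≤ 2 * Real.log m' * (m' : ℝ) ^ ((Real.log m')⁻¹) / t ∧
      2 * Real.log m' * (m' : ℝ) ^ ((Real.log m')⁻¹) / t ≤ 6 * Real.log m' / t :=
  partition_of_unity_pointwiseLip_bound_general A k U m' hm' hmult ψ hψ φ hφ
end

section
/- Let Δ and Δ' be two n-simplices in ℓ₂(I) of the form Δ = {x ∈ Σ(I) : Σ_{j∈J} x_j = 1} for (n+1)-point sets J, J' ⊆ I, where Σ(I) = {x ∈ ℓ₂(I) : x_i ≥ 0, Σ x_i = 1}, and suppose Δ ∩ Δ' ≠ ∅. Then for all x ∈ Δ and y ∈ Δ', there exists z ∈ Δ ∩ Δ' such that |x − z| + |z − y| ≤ 4·√n·|x − y|, where |·| is the ℓ₂-norm. -/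
/-!
Let `K = J ∩ J'` (nonempty, since `Δ ∩ Δ' ≠ ∅`) and `s = ∑_{k ∈ K} x_k`. As `y` vanishes on
`J \ K`, a set of at most `n` points, Cauchy–Schwarz gives `(1 - s)² = (∑_{J \ K} x_i)² ≤ n ‖x - y‖²`.
If `s > 0`, let `z` be `x` restricted to `K` and renormalised: then
`‖x - z‖² ≤ ∑_{J \ K} x_i² + (1 - s)² ≤ (n + 1) ‖x - y‖²` and `‖z - y‖ ≤ ‖x - z‖ + ‖x - y‖`.
If `s = 0`, then `√n ‖x - y‖ ≥ 1` while points of `Σ(I)` have norm at most `1`, so any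
`z ∈ Δ ∩ Δ'` will do.
For `n = 0` both simplices are the same single point.
-/

open Finset

namespace lp

variable {I : Type*}

theorem sum_sq_le_norm_sq (f : lp (fun _ : I => ℝ) 2) (S : Finset I) :
    ∑ i ∈ S, f i ^ 2 ≤ ‖f‖ ^ 2 := by
  simpa only [ENNReal.toReal_ofNat, Real.rpow_two, Real.norm_eq_abs, sq_abs] using
    lp.sum_rpow_le_norm_rpow (p := 2) (by norm_num) f S

theorem norm_sq_eq_sum_of_support_subset (f : lp (fun _ : I => ℝ) 2) {S : Finset I}
    (h : ∀ i ∉ S, f i = 0) : ‖f‖ ^ 2 = ∑ i ∈ S, f i ^ 2 := by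
  rw [← real_inner_self_eq_norm_sq, lp.inner_eq_tsum, tsum_eq_sum (s := S) fun i hi => by
    simp [h i hi]]
  simp only [real_inner_self_eq_norm_sq, Real.norm_eq_abs, sq_abs]

theorem sum_sq_le_norm_sub_sq (x y : lp (fun _ : I => ℝ) 2) {S : Finset I}
    (hy : ∀ i ∈ S, y i = 0) : ∑ i ∈ S, x i ^ 2 ≤ ‖x - y‖ ^ 2 := by
  refine le_of_eq_of_le (sum_congr rfl fun i hi => ?_) (sum_sq_le_norm_sq (x - y) S)
  simp [hy i hi]

end lp

section

variable {I : Type*}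

def simplexFace (J : Finset I) : Set (lp (fun _ : I => ℝ) 2) :=
  {x | (∀ i, 0 ≤ x i) ∧ HasSum (fun i => x i) 1 ∧ ∑ j ∈ J, x j = 1}

namespace simplexFace

variable {J J' K : Finset I} {x y z : lp (fun _ : I => ℝ) 2}

theorem eq_zero_of_notMem (hx : x ∈ simplexFace J) {i : I} (hi : i ∉ J) : x i = 0 := by
  classical
  obtain ⟨h0, hsum, hJ⟩ := hx
  have h := sum_le_hasSum (insert i J) (fun j _ => h0 j) hsum
  rw [sum_insert hi, hJ] at h
  linarith [h0 i]

theorem mem_of_support_subset (hKJ : K ⊆ J) (h0 : ∀ i, 0 ≤ x i) (hsupp : ∀ i ∉ K, x i = 0)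
    (hK : ∑ k ∈ K, x k = 1) : x ∈ simplexFace J := by
  refine ⟨h0, hK ▸ hasSum_sum_of_ne_finset_zero hsupp, ?_⟩
  rw [← hK, sum_subset hKJ fun i _ hi => hsupp i hi]

theorem norm_le_one (hx : x ∈ simplexFace J) : ‖x‖ ≤ 1 := by
  have h : ‖x‖ ^ 2 ≤ 1 ^ 2 := by
    rw [lp.norm_sq_eq_sum_of_support_subset x fun i => eq_zero_of_notMem hx, ← hx.2.2]
    exact sum_sq_le_sq_sum_of_nonneg fun i _ => hx.1 i
  exact (pow_le_pow_iff_left₀ (norm_nonneg x) zero_le_one two_ne_zero).mp h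

theorem norm_sub_add_norm_sub_le_four (hx : x ∈ simplexFace J) (hz : z ∈ simplexFace K)
    (hy : y ∈ simplexFace J') : ‖x - z‖ + ‖z - y‖ ≤ 4 := by
  linarith [norm_sub_le x z, norm_sub_le z y, norm_le_one hx, norm_le_one hy, norm_le_one hz]

theorem subsingleton (hJ : #J = 1) : (simplexFace J).Subsingleton := by
  obtain ⟨j, rfl⟩ := card_eq_one.mp hJ
  intro x hx y hy
  ext i
  by_cases hij : i = j
  · have hx1 : x j = 1 := by simpa using hx.2.2
    have hy1 : y j = 1 := by simpa using hy.2.2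
    rw [hij, hx1, hy1]
  · rw [eq_zero_of_notMem hx (by simpa using hij), eq_zero_of_notMem hy (by simpa using hij)]

theorem nonempty (hx : x ∈ simplexFace J) : J.Nonempty :=
  nonempty_of_sum_ne_zero (hx.2.2 ▸ one_ne_zero)

theorem inter_subset [DecidableEq I] :
    simplexFace J ∩ simplexFace J' ⊆ simplexFace (J ∩ J') := by
  rintro x ⟨hx, hx'⟩
  refine ⟨hx.1, hx.2.1, (sum_subset inter_subset_left fun i hi hi' => ?_).trans hx.2.2⟩
  exact eq_zero_of_notMem hx' fun h => hi' (mem_inter.mpr ⟨hi, h⟩)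

theorem card_sdiff_le [DecidableEq I] {n : ℕ} (hJ : #J = n + 1)
    (hx : x ∈ simplexFace J ∩ simplexFace J') : #(J \ J') ≤ n := by
  have := card_sdiff_add_card_inter J J'
  have := (nonempty (inter_subset hx)).card_pos
  omega

theorem sum_sdiff_sq_le [DecidableEq I] (hy : y ∈ simplexFace J') :
    ∑ i ∈ J \ J', x i ^ 2 ≤ ‖x - y‖ ^ 2 :=
  lp.sum_sq_le_norm_sub_sq x y fun _ hi => eq_zero_of_notMem hy (mem_sdiff.mp hi).2

theorem sq_one_sub_sum_inter_le [DecidableEq I] (hx : x ∈ simplexFace J)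
    (hy : y ∈ simplexFace J') : (1 - ∑ k ∈ J ∩ J', x k) ^ 2 ≤ #(J \ J') * ‖x - y‖ ^ 2 := by
  rw [← hx.2.2, ← sum_sdiff_eq_sub inter_subset_left, sdiff_inter_self_left]
  exact sq_sum_le_card_mul_sum_sq.trans (by gcongr; exact sum_sdiff_sq_le hy)

end simplexFace

noncomputable def normalizedRestrict [DecidableEq I] (x : lp (fun _ : I => ℝ) 2) (K : Finset I) :
    lp (fun _ : I => ℝ) 2 :=
  (∑ k ∈ K, x k)⁻¹ • ∑ k ∈ K, lp.single 2 k (x k)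

namespace normalizedRestrict

variable [DecidableEq I] {J K : Finset I} {x : lp (fun _ : I => ℝ) 2}

theorem apply (i : I) :
    normalizedRestrict x K i = if i ∈ K then x i / ∑ k ∈ K, x k else 0 := by
  simp only [normalizedRestrict, lp.coeFn_smul, lp.coeFn_sum, Pi.smul_apply, Finset.sum_apply,
    lp.single_apply, Pi.single_apply, smul_eq_mul, sum_ite_eq, mul_ite, mul_zero, div_eq_inv_mul]

theorem mem_simplexFace (h0 : ∀ i, 0 ≤ x i) (hs : 0 < ∑ k ∈ K, x k) (hKJ : K ⊆ J) :
    normalizedRestrict x K ∈ simplexFace J := by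
  refine simplexFace.mem_of_support_subset hKJ (fun i => ?_) (fun i hi => by simp [apply, hi]) ?_
  · rw [apply]; split_ifs
    exacts [div_nonneg (h0 i) hs.le, le_rfl]
  · rw [sum_congr rfl fun k hk => by rw [apply, if_pos hk], ← sum_div, div_self hs.ne']

theorem norm_sub_sq_le (hx : x ∈ simplexFace J) (hKJ : K ⊆ J) (hs : 0 < ∑ k ∈ K, x k) :
    ‖x - normalizedRestrict x K‖ ^ 2 ≤ ∑ i ∈ J \ K, x i ^ 2 + (1 - ∑ k ∈ K, x k) ^ 2 := by
  generalize hs_def : ∑ k ∈ K, x k = s at hs ⊢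
  have hsupp : ∀ i ∉ J, (x - normalizedRestrict x K) i = 0 := fun i hi => by
    simp [apply, simplexFace.eq_zero_of_notMem hx hi]
  rw [lp.norm_sq_eq_sum_of_support_subset _ hsupp, ← sum_sdiff hKJ]
  gcongr ?_ + ?_
  · exact (sum_congr rfl fun i hi => by simp [apply, (mem_sdiff.mp hi).2]).le
  · have hK : ∑ k ∈ K, (x - normalizedRestrict x K) k ^ 2 =
        ((1 - s) / s) ^ 2 * ∑ k ∈ K, x k ^ 2 := by
      rw [mul_sum]
      refine sum_congr rfl fun k hk => ?_
      simp only [lp.coeFn_sub, Pi.sub_apply, apply, if_pos hk, hs_def]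
      field_simp
      ring
    calc ∑ k ∈ K, (x - normalizedRestrict x K) k ^ 2
        = ((1 - s) / s) ^ 2 * ∑ k ∈ K, x k ^ 2 := hK
      _ ≤ ((1 - s) / s) ^ 2 * s ^ 2 := by
        gcongr; exact hs_def ▸ sum_sq_le_sq_sum_of_nonneg fun k _ => hx.1 k
      _ = (1 - s) ^ 2 := by field_simp

end normalizedRestrict

end

theorem norm_sub_add_norm_sub_le_of_sq_le {E : Type*} [SeminormedAddCommGroup E] {n : ℝ}
    (hn : 1 ≤ n) {x y z : E} (h : ‖x - z‖ ^ 2 ≤ (n + 1) * ‖x - y‖ ^ 2) :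
    ‖x - z‖ + ‖z - y‖ ≤ 4 * √n * ‖x - y‖ := by
  have hzy : ‖z - y‖ ≤ ‖x - z‖ + ‖x - y‖ :=
    norm_sub_rev z x ▸ norm_sub_le_norm_sub_add_norm_sub z x y
  have hr : √n ^ 2 = n := Real.sq_sqrt (by linarith)
  have hr1 : 1 ≤ √n := Real.one_le_sqrt.mpr hn
  have hd := norm_nonneg (x - y)
  -- `‖x - z‖ ≤ √(n + 1) ‖x - y‖` and `2 √(n + 1) ≤ 4 √n - 1` for `n ≥ 1`
  have hsq : (2 * ‖x - z‖) ^ 2 ≤ ((4 * √n - 1) * ‖x - y‖) ^ 2 := by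
    nlinarith [mul_nonneg (mul_nonneg (sub_nonneg.mpr hr1) (by linarith : (0 : ℝ) ≤ 12 * √n + 4))
      (sq_nonneg ‖x - y‖)]
  linarith [(pow_le_pow_iff_left₀ (by positivity) (by nlinarith) two_ne_zero).mp hsq]

/-- Two intersecting `n`-simplices `Δ, Δ'` in `Σ(I) ⊆ ℓ₂(I)` admit, for any `x ∈ Δ` and
`y ∈ Δ'`, a point `z ∈ Δ ∩ Δ'` with `|x−z| + |z−y| ≤ 4√n·|x−y|`. -/
theorem simplices_intersection_detour {I : Type*} (n : ℕ)
    (J J' : Finset I) (hJ : J.card = n + 1) (hJ' : J'.card = n + 1)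
    (Δ Δ' : Set (lp (fun _ : I => ℝ) 2))
    (hΔ : Δ = {x | (∀ i, 0 ≤ x i) ∧ HasSum (fun i => x i) 1 ∧ ∑ j ∈ J, x j = 1})
    (hΔ' : Δ' = {x | (∀ i, 0 ≤ x i) ∧ HasSum (fun i => x i) 1 ∧ ∑ j ∈ J', x j = 1})
    (hne : (Δ ∩ Δ').Nonempty)
    (x y : lp (fun _ : I => ℝ) 2) (hx : x ∈ Δ) (hy : y ∈ Δ') :
    ∃ z ∈ Δ ∩ Δ', ‖x - z‖ + ‖z - y‖ ≤ 4 * Real.sqrt n * ‖x - y‖ := by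
  classical
  obtain rfl : Δ = simplexFace J := hΔ
  obtain rfl : Δ' = simplexFace J' := hΔ'
  obtain ⟨w, hw⟩ := hne
  rcases n.eq_zero_or_pos with rfl | hn
  · have hxw := simplexFace.subsingleton hJ hx hw.1
    have hyw := simplexFace.subsingleton hJ' hy hw.2
    exact ⟨w, hw, by simp [hxw, hyw]⟩
  have hgap : (1 - ∑ k ∈ J ∩ J', x k) ^ 2 ≤ n * ‖x - y‖ ^ 2 :=
    (simplexFace.sq_one_sub_sum_inter_le hx hy).trans
      (by gcongr; exact_mod_cast simplexFace.card_sdiff_le hJ hw)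
  rcases (sum_nonneg fun k _ => hx.1 k : 0 ≤ ∑ k ∈ J ∩ J', x k).eq_or_lt with hs | hs
  · refine ⟨w, hw, (simplexFace.norm_sub_add_norm_sub_le_four hx hw.1 hy).trans ?_⟩
    have h1 : 1 ≤ √n * ‖x - y‖ := by
      rw [← Real.sqrt_sq (norm_nonneg (x - y)), ← Real.sqrt_mul n.cast_nonneg]
      exact Real.one_le_sqrt.mpr (by simpa [← hs] using hgap)
    linarith
  refine ⟨normalizedRestrict x (J ∩ J'), ⟨normalizedRestrict.mem_simplexFace hx.1 hs
    inter_subset_left, normalizedRestrict.mem_simplexFace hx.1 hs inter_subset_right⟩,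
    norm_sub_add_norm_sub_le_of_sq_le (by exact_mod_cast hn) ?_⟩
  calc ‖x - normalizedRestrict x (J ∩ J')‖ ^ 2
      ≤ ∑ i ∈ J \ J', x i ^ 2 + (1 - ∑ k ∈ J ∩ J', x k) ^ 2 := by
        simpa only [sdiff_inter_self_left] using
          normalizedRestrict.norm_sub_sq_le hx inter_subset_left hs
    _ ≤ ‖x - y‖ ^ 2 + n * ‖x - y‖ ^ 2 := add_le_add (simplexFace.sum_sdiff_sq_le hy) hgap
    _ = (n + 1) * ‖x - y‖ ^ 2 := by ring
end

section
/- Let γ ∈ (0, π] and suppose z, x, y are points in a Euclidean space with the angle at z in the triangle x z y at least γ. Let κ = sqrt((1 − cos γ)/2). Then κ·(|x − z| + |z − y|) ≤ |x − y|. -/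
open InnerProductGeometry Real

/-- The defect is `(1 + t) / 2 * (a - b) ^ 2`. -/
lemma half_one_sub_mul_sq_add_le {a b t : ℝ} (ht : -1 ≤ t) :
    (1 - t) / 2 * ((a + b) * (a + b)) ≤ a * a + b * b - 2 * a * b * t := by
  nlinarith [mul_nonneg (by linarith : 0 ≤ 1 + t) (mul_self_nonneg (a - b))]

lemma sqrt_half_one_sub_cos_mul_add_norm_le_norm_sub {V : Type*} [NormedAddCommGroup V]
    [InnerProductSpace ℝ V] {u v : V} {γ : ℝ} (hγ : 0 ≤ γ) (h : γ ≤ angle u v) :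
    √((1 - cos γ) / 2) * (‖u‖ + ‖v‖) ≤ ‖u - v‖ := by
  have hcos : cos (angle u v) ≤ cos γ := cos_le_cos_of_nonneg_of_le_pi hγ (angle_le_pi u v) h
  have hsq : (1 - cos γ) / 2 * ((‖u‖ + ‖v‖) * (‖u‖ + ‖v‖)) ≤ ‖u - v‖ * ‖u - v‖ := calc
    _ ≤ ‖u‖ * ‖u‖ + ‖v‖ * ‖v‖ - 2 * ‖u‖ * ‖v‖ * cos γ :=
      half_one_sub_mul_sq_add_le (neg_one_le_cos γ)
    _ ≤ ‖u‖ * ‖u‖ + ‖v‖ * ‖v‖ - 2 * ‖u‖ * ‖v‖ * cos (angle u v) := by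
      gcongr
    _ = ‖u - v‖ * ‖u - v‖ :=
      (norm_sub_sq_eq_norm_sq_add_norm_sq_sub_two_mul_norm_mul_norm_mul_cos_angle u v).symm
  calc √((1 - cos γ) / 2) * (‖u‖ + ‖v‖)
      = √((1 - cos γ) / 2 * ((‖u‖ + ‖v‖) * (‖u‖ + ‖v‖))) := by
        rw [sqrt_mul' _ (by positivity), sqrt_mul_self (by positivity)]
    _ ≤ √(‖u - v‖ * ‖u - v‖) := sqrt_le_sqrt hsq
    _ = ‖u - v‖ := sqrt_mul_self (norm_nonneg _)

theorem angle_lower_bound_dist_general {V : Type*} [NormedAddCommGroup V] [InnerProductSpace ℝ V]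
    (x y z : V) (γ : ℝ) (hγ0 : 0 < γ)
    (hangle : γ ≤ InnerProductGeometry.angle (x - z) (y - z)) :
    Real.sqrt ((1 - Real.cos γ) / 2) * (‖x - z‖ + ‖z - y‖) ≤ ‖x - y‖ := by
  rw [norm_sub_rev z y, ← sub_sub_sub_cancel_right x y z]
  exact sqrt_half_one_sub_cos_mul_add_norm_le_norm_sub hγ0.le hangle

/-- If the angle at `z` in the triangle `x z y` is at least `γ ∈ (0, π]` and
`κ = √((1 − cos γ)/2)`, then `κ·(|x−z| + |z−y|) ≤ |x−y|`. -/
theorem angle_lower_bound_dist {V : Type*} [NormedAddCommGroup V] [InnerProductSpace ℝ V]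
    (x y z : V) (γ : ℝ) (hγ0 : 0 < γ) (hγπ : γ ≤ Real.pi)
    (hangle : γ ≤ InnerProductGeometry.angle (x - z) (y - z)) :
    Real.sqrt ((1 - Real.cos γ) / 2) * (‖x - z‖ + ‖z - y‖) ≤ ‖x - y‖ :=
  angle_lower_bound_dist_general x y z γ hγ0 hangle
end

section
/- Let K ⊆ ℝ^n be a convex body containing the origin in its interior, with inradius r = min_{x∈∂K} |x| and circumradius R = max_{x∈∂K} |x| (with respect to the origin). Then the radial projection ρ : K \ B(0,r)° → ∂K, ρ(x) = (t(x))·x where t(x) > 0 is the unique scalar with t(x)·x ∈ ∂K, is (R/r)²-Lipschitz on K \ {x : |x| < r}. -/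
/-!
Write `g` for the gauge of `K`. A boundary point `t • x` with `t > 0` has `g (t • x) = 1`, so
`ρ x = (g x)⁻¹ • x`; this map is constant on rays, and the hypotheses on `∂K` become
`r * g ≤ ‖·‖` everywhere and `‖x‖ ≤ R * g x` on the domain of `ρ`. Normalising `x` and `y` to
the unit sphere costs a factor `1 / min ‖x‖ ‖y‖ ≤ 1 / r`.

For unit vectors `x`, `y` with `g x ≤ g y`, Hahn–Banach for the sublinear `g` gives a vector `ν`
with `⟪ν, ·⟫ ≤ g` and `⟪ν, y⟫ = g y`, hence `‖ν‖ ≤ 1 / r` and `g y - g x ≤ ⟪ν, y - x⟫`. Splitting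
`ν` into its components along `y` and orthogonal to `y` bounds the right side by
`g y ‖x - y‖² / 2 + √(r⁻² - (g y)²) ‖x - y‖`, and this is exactly what makes
`‖x / g x - y / g y‖ ≤ ‖x - y‖ / (r g x g y) ≤ (R² / r) ‖x - y‖`.
-/

open scoped RealInnerProductSpace Topology

theorem sub_sq_add_mul_mul_sq_le {a b r N δ : ℝ} (hab : a ≤ b)
    (hN : N ^ 2 ≤ r⁻¹ ^ 2 - b ^ 2) (h : b - a - b * δ ^ 2 / 2 ≤ N * δ) :
    (b - a) ^ 2 + a * b * δ ^ 2 ≤ (r⁻¹ * δ) ^ 2 := by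
  rcases le_total 0 (b - a - b * δ ^ 2 / 2) with hX | hX
  · have hsq : (b - a - b * δ ^ 2 / 2) ^ 2 ≤ (N * δ) ^ 2 := pow_le_pow_left₀ hX h 2
    nlinarith [sq_nonneg (b * δ ^ 2)]
  · nlinarith [sq_nonneg N, sq_nonneg δ]

section Module

variable {E : Type*} [AddCommGroup E] [Module ℝ E] {K : Set E}

theorem exists_linearMap_le_gauge (hc : Convex ℝ K) (hK : Absorbent ℝ K) (y : E) :
    ∃ ℓ : E →ₗ[ℝ] ℝ, ℓ y = gauge K y ∧ ∀ z, ℓ z ≤ gauge K z := by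
  let f : E →ₗ.[ℝ] ℝ := LinearPMap.mkSpanSingleton' y (gauge K y) fun c hcy => by
    rcases smul_eq_zero.1 hcy with rfl | rfl <;> simp
  obtain ⟨ℓ, hℓf, hℓ⟩ := exists_extension_of_le_sublinear f (gauge K)
    (fun c hc x => gauge_smul_of_nonneg hc.le x) (gauge_add_le hc hK) (by
      rintro ⟨_, hz⟩
      obtain ⟨c, rfl⟩ := Submodule.mem_span_singleton.1 hz
      rw [LinearPMap.mkSpanSingleton'_apply, RingHom.id_apply, smul_eq_mul]
      rcases le_total 0 c with hc0 | hc0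
      · rw [gauge_smul_of_nonneg hc0, smul_eq_mul]
      · exact (mul_nonpos_of_nonpos_of_nonneg hc0 (gauge_nonneg y)).trans (gauge_nonneg _))
  exact ⟨ℓ, (hℓf ⟨y, Submodule.mem_span_singleton_self y⟩).trans
    (LinearPMap.mkSpanSingleton'_apply_self _ _ _ _), hℓ⟩

noncomputable def radialProjection (K : Set E) (x : E) : E := (gauge K x)⁻¹ • x

theorem radialProjection_smul {c : ℝ} (hc : 0 < c) (x : E) :
    radialProjection K (c • x) = radialProjection K x := by
  rw [radialProjection, radialProjection, gauge_smul_of_nonneg hc.le, smul_eq_mul, smul_smul,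
    mul_inv_rev, mul_assoc, inv_mul_cancel₀ hc.ne', mul_one]

end Module

section NormedSpace

variable {E : Type*} [NormedAddCommGroup E] [NormedSpace ℝ E] {K : Set E}

theorem mul_gauge_eq_one_of_smul_mem_frontier (hc : Convex ℝ K) (hK : K ∈ 𝓝 0) {t : ℝ}
    {x : E} (ht : 0 ≤ t) (h : t • x ∈ frontier K) : t * gauge K x = 1 := by
  rw [← smul_eq_mul, ← gauge_smul_of_nonneg ht]
  exact (gauge_eq_one_iff_mem_frontier hc hK).2 h

theorem mul_gauge_le_norm_of_forall_mem_frontier (hc : Convex ℝ K) (hK : K ∈ 𝓝 0) {r : ℝ}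
    (hr : ∀ v ∈ frontier K, r ≤ ‖v‖) (x : E) : r * gauge K x ≤ ‖x‖ := by
  rcases (gauge_nonneg x).eq_or_lt with hx | hx
  · rw [← hx, mul_zero]
    exact norm_nonneg x
  have hfr : (gauge K x)⁻¹ • x ∈ frontier K := by
    rw [← gauge_eq_one_iff_mem_frontier hc hK, gauge_smul_of_nonneg (inv_nonneg.2 hx.le),
      smul_eq_mul, inv_mul_cancel₀ hx.ne']
  have hrx := hr _ hfr
  rwa [norm_smul, norm_inv, Real.norm_of_nonneg hx.le, inv_mul_eq_div, le_div_iff₀ hx] at hrx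

end NormedSpace

section InnerProductSpace

variable {E : Type*} [NormedAddCommGroup E] [InnerProductSpace ℝ E] {K : Set E}

theorem norm_smul_sub_smul_sq_of_norm_eq_one {x y : E} (hx : ‖x‖ = 1) (hy : ‖y‖ = 1) (α β : ℝ) :
    ‖α • x - β • y‖ ^ 2 = (α - β) ^ 2 + α * β * ‖x - y‖ ^ 2 := by
  simp only [norm_sub_sq_real, norm_smul, real_inner_smul_left, real_inner_smul_right, hx, hy,
    Real.norm_eq_abs, mul_pow, sq_abs]
  ring

theorem norm_mul_norm_inv_smul_sub_le {x y : E} (h : ‖y‖ ≤ ‖x‖) :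
    ‖y‖ * ‖‖x‖⁻¹ • x - ‖y‖⁻¹ • y‖ ≤ ‖x - y‖ := by
  rcases eq_or_ne y 0 with rfl | hy
  · simp
  have hy0 : 0 < ‖y‖ := norm_pos_iff.2 hy
  have hx0 : 0 < ‖x‖ := hy0.trans_le h
  have hx1 : ‖‖x‖⁻¹ • x‖ = 1 := norm_smul_inv_norm (norm_pos_iff.1 hx0)
  have hy1 : ‖‖y‖⁻¹ • y‖ = 1 := norm_smul_inv_norm hy
  have key := norm_smul_sub_smul_sq_of_norm_eq_one hx1 hy1 ‖x‖ ‖y‖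
  rw [smul_inv_smul₀ hx0.ne', smul_inv_smul₀ hy0.ne'] at key
  refine le_of_sq_le_sq ?_ (norm_nonneg _)
  nlinarith [sq_nonneg (‖x‖ - ‖y‖), sq_nonneg ‖‖x‖⁻¹ • x - ‖y‖⁻¹ • y‖]

variable [CompleteSpace E]

theorem exists_inner_le_gauge (hc : Convex ℝ K) (hK : K ∈ 𝓝 0) (y : E) :
    ∃ ν : E, ⟪ν, y⟫ = gauge K y ∧ ∀ z, ⟪ν, z⟫ ≤ gauge K z := by
  obtain ⟨ℓ, hℓy, hℓ⟩ := exists_linearMap_le_gauge hc (absorbent_nhds_zero hK) y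
  obtain ⟨ε, hε, hball⟩ := Metric.mem_nhds_iff.1 hK
  have hle (z : E) : ℓ z ≤ ε⁻¹ * ‖z‖ := by
    rw [inv_mul_eq_div, le_div_iff₀ hε, mul_comm]
    exact (mul_le_mul_of_nonneg_left (hℓ z) hε.le).trans (mul_gauge_le_norm hball)
  have hbound (z : E) : ‖ℓ z‖ ≤ ε⁻¹ * ‖z‖ := by
    have hneg := hle (-z)
    rw [map_neg, norm_neg] at hneg
    exact abs_le.2 ⟨by linarith, hle z⟩
  refine ⟨(InnerProductSpace.toDual ℝ E).symm (ℓ.mkContinuous ε⁻¹ hbound), ?_, fun z => ?_⟩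
  all_goals rw [InnerProductSpace.toDual_symm_apply, LinearMap.mkContinuous_apply]
  exacts [hℓy, hℓ z]

theorem norm_radialProjection_sub_le_of_norm_eq_one (hc : Convex ℝ K) (hK : K ∈ 𝓝 0) {r : ℝ}
    (hr : 0 < r) (hrK : ∀ z, r * gauge K z ≤ ‖z‖) {x y : E} (hx : ‖x‖ = 1) (hy : ‖y‖ = 1)
    (hgx : 0 < gauge K x) (hgy : 0 < gauge K y) :
    ‖radialProjection K x - radialProjection K y‖ ≤ ‖x - y‖ / (r * gauge K x * gauge K y) := by
  wlog hxy : gauge K x ≤ gauge K y generalizing x y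
  · rw [norm_sub_rev, norm_sub_rev x, mul_right_comm]
    exact this hy hx hgy hgx (le_of_not_ge hxy)
  obtain ⟨ν, hνy, hν⟩ := exists_inner_le_gauge hc hK y
  set a := gauge K x
  set b := gauge K y
  have hνr : ‖ν‖ ≤ r⁻¹ := by
    have h : r * ‖ν‖ ^ 2 ≤ ‖ν‖ := by
      rw [← real_inner_self_eq_norm_sq]
      exact (mul_le_mul_of_nonneg_left (hν ν) hr.le).trans (hrK ν)
    rw [← one_div, le_div_iff₀ hr]
    nlinarith [norm_nonneg ν]
  set w := ν - b • y
  have hw : ‖w‖ ^ 2 ≤ r⁻¹ ^ 2 - b ^ 2 := by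
    rw [norm_sub_sq_real, norm_smul, real_inner_smul_right, hνy, hy, Real.norm_of_nonneg hgy.le]
    nlinarith [pow_le_pow_left₀ (norm_nonneg ν) hνr 2]
  have hwxy : b - a - b * ‖x - y‖ ^ 2 / 2 ≤ ‖w‖ * ‖x - y‖ := by
    have hinner : ⟪w, y - x⟫ = ⟪ν, y⟫ - ⟪ν, x⟫ - b * ‖x - y‖ ^ 2 / 2 := by
      rw [norm_sub_sq_real, hx, hy]
      simp only [w, inner_sub_left, inner_sub_right, real_inner_smul_left,
        real_inner_self_eq_norm_sq, hy, real_inner_comm x y]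
      ring
    have hcs := real_inner_le_norm w (y - x)
    rw [hinner, hνy, norm_sub_rev y x] at hcs
    linarith [hν x]
  refine le_of_sq_le_sq ?_ (by positivity)
  rw [radialProjection, radialProjection, norm_smul_sub_smul_sq_of_norm_eq_one hx hy,
    div_pow, le_div_iff₀ (by positivity)]
  calc ((a⁻¹ - b⁻¹) ^ 2 + a⁻¹ * b⁻¹ * ‖x - y‖ ^ 2) * (r * a * b) ^ 2
      = r ^ 2 * ((b - a) ^ 2 + a * b * ‖x - y‖ ^ 2) := by field_simp
    _ ≤ r ^ 2 * (r⁻¹ * ‖x - y‖) ^ 2 := by gcongr; exact sub_sq_add_mul_mul_sq_le hxy hw hwxy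
    _ = ‖x - y‖ ^ 2 := by field_simp

theorem norm_radialProjection_sub_le (hc : Convex ℝ K) (hK : K ∈ 𝓝 0) {r R : ℝ} (hr : 0 < r)
    (hrK : ∀ z, r * gauge K z ≤ ‖z‖) {x y : E} (hRx : ‖x‖ ≤ R * gauge K x)
    (hRy : ‖y‖ ≤ R * gauge K y) (hyr : r ≤ ‖y‖) (hyx : ‖y‖ ≤ ‖x‖) :
    ‖radialProjection K x - radialProjection K y‖ ≤ (R / r) ^ 2 * ‖x - y‖ := by
  have hy0 : 0 < ‖y‖ := hr.trans_le hyr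
  have hx0 : 0 < ‖x‖ := hy0.trans_le hyx
  have hR0 : 0 < R := pos_of_mul_pos_left (hy0.trans_le hRy) (gauge_nonneg y)
  have hR {z : E} (hz : 0 < ‖z‖) (hRz : ‖z‖ ≤ R * gauge K z) : 1 ≤ R * gauge K (‖z‖⁻¹ • z) := by
    rwa [gauge_smul_of_nonneg (inv_nonneg.2 hz.le), smul_eq_mul, mul_left_comm,
      le_inv_mul_iff₀ hz, mul_one]
  set e₁ := ‖x‖⁻¹ • x
  set e₂ := ‖y‖⁻¹ • y
  have hRe₁ := hR hx0 hRx
  have hRe₂ := hR hy0 hRy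
  have ha : 0 < gauge K e₁ := pos_of_mul_pos_right (one_pos.trans_le hRe₁) hR0.le
  have hb : 0 < gauge K e₂ := pos_of_mul_pos_right (one_pos.trans_le hRe₂) hR0.le
  have he : ‖y‖ * ‖e₁ - e₂‖ ≤ ‖x - y‖ := norm_mul_norm_inv_smul_sub_le hyx
  calc ‖radialProjection K x - radialProjection K y‖
      = ‖radialProjection K e₁ - radialProjection K e₂‖ := by
        rw [radialProjection_smul (inv_pos.2 hx0), radialProjection_smul (inv_pos.2 hy0)]
    _ ≤ ‖e₁ - e₂‖ / (r * gauge K e₁ * gauge K e₂) :=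
        norm_radialProjection_sub_le_of_norm_eq_one hc hK hr hrK
          (norm_smul_inv_norm (norm_pos_iff.1 hx0)) (norm_smul_inv_norm (norm_pos_iff.1 hy0))
          ha hb
    _ ≤ ‖e₁ - e₂‖ / (r * gauge K e₁ * gauge K e₂) * ((R * gauge K e₁) * (R * gauge K e₂)) :=
        le_mul_of_one_le_right (by positivity) (one_le_mul_of_one_le_of_one_le hRe₁ hRe₂)
    _ = R ^ 2 / r * (‖y‖ * ‖e₁ - e₂‖) / ‖y‖ := by field_simp
    _ ≤ R ^ 2 / r * ‖x - y‖ / r := by gcongr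
    _ = (R / r) ^ 2 * ‖x - y‖ := by ring

end InnerProductSpace

theorem radial_projection_lipschitz_general (n : ℕ)
    (K : Set (EuclideanSpace ℝ (Fin n)))
    (hconv : Convex ℝ K) (h0 : 0 ∈ interior K)
    (r R : ℝ) (hr0 : 0 < r)
    (hrmin : ∀ x ∈ frontier K, r ≤ ‖x‖)
    (hRmax : ∀ x ∈ frontier K, ‖x‖ ≤ R)
    (ρ : EuclideanSpace ℝ (Fin n) → EuclideanSpace ℝ (Fin n))
    (hρ : ∀ x ∈ K, r ≤ ‖x‖ → ρ x ∈ frontier K ∧ ∃ t : ℝ, 0 < t ∧ ρ x = t • x) :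
    ∀ x ∈ K, ∀ y ∈ K, r ≤ ‖x‖ → r ≤ ‖y‖ →
      dist (ρ x) (ρ y) ≤ (R / r) ^ 2 * dist x y := by
  have hK : K ∈ 𝓝 0 := mem_interior_iff_mem_nhds.1 h0
  have hρK : ∀ x ∈ K, r ≤ ‖x‖ → ρ x = radialProjection K x ∧ ‖x‖ ≤ R * gauge K x := by
    intro x hx hxr
    obtain ⟨hfr, t, ht, hρx⟩ := hρ x hx hxr
    have htx := mul_gauge_eq_one_of_smul_mem_frontier hconv hK ht.le (hρx ▸ hfr)
    refine ⟨by rw [hρx, radialProjection, eq_inv_of_mul_eq_one_left htx], ?_⟩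
    have hR := hRmax _ hfr
    rw [hρx, norm_smul, Real.norm_of_nonneg ht.le] at hR
    calc ‖x‖ = t * ‖x‖ * gauge K x := by rw [mul_right_comm, htx, one_mul]
      _ ≤ R * gauge K x := mul_le_mul_of_nonneg_right hR (gauge_nonneg x)
  intro x hx y hy hxr hyr
  wlog hyx : ‖y‖ ≤ ‖x‖ generalizing x y
  · rw [dist_comm, dist_comm x]
    exact this y hy x hx hyr hxr (le_of_not_ge hyx)
  obtain ⟨hρx, hRx⟩ := hρK x hx hxr
  obtain ⟨hρy, hRy⟩ := hρK y hy hyr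
  rw [hρx, hρy, dist_eq_norm, dist_eq_norm]
  exact norm_radialProjection_sub_le hconv hK hr0
    (mul_gauge_le_norm_of_forall_mem_frontier hconv hK hrmin) hRx hRy hyr hyx

/-- The radial projection of a convex body `K` (with `0` in its interior, inradius `r`
and circumradius `R` with respect to the origin) onto its boundary is `(R/r)²`-Lipschitz
on `K ∖ {|x| < r}`. -/
theorem radial_projection_lipschitz (n : ℕ)
    (K : Set (EuclideanSpace ℝ (Fin n)))
    (hconv : Convex ℝ K) (hcomp : IsCompact K) (h0 : 0 ∈ interior K)
    (r R : ℝ) (hr0 : 0 < r)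
    (hrmin : ∀ x ∈ frontier K, r ≤ ‖x‖)
    (hRmax : ∀ x ∈ frontier K, ‖x‖ ≤ R)
    (ρ : EuclideanSpace ℝ (Fin n) → EuclideanSpace ℝ (Fin n))
    (hρ : ∀ x ∈ K, r ≤ ‖x‖ → ρ x ∈ frontier K ∧ ∃ t : ℝ, 0 < t ∧ ρ x = t • x) :
    ∀ x ∈ K, ∀ y ∈ K, r ≤ ‖x‖ → r ≤ ‖y‖ →
      dist (ρ x) (ρ y) ≤ (R / r) ^ 2 * dist x y :=
  radial_projection_lipschitz_general n K hconv h0 r R hr0 hrmin hRmax ρ hρ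
end

section
/- Let Y be a metric space admitting a conical bicombing σ and let f : Sⁿ → Y be 1-Lipschitz. Fix p ∈ Y and set R = sup_{x∈Sⁿ} d(p, f(x)). Define F : B^{n+1} → Y by F(0) = p and F(x) = σ(p, f(x/|x|), |x|) for x ≠ 0. Then F is √(1+R²)-Lipschitz. -/
/-!
Write `x = ‖x‖ • u` with `u` on the unit sphere (any `u` when `x = 0`), so that
`F x = σ(p, f u, ‖x‖)`. For `‖y‖ = b ≤ a = ‖x‖`, going from `F x` to `F y` first along the
geodesic towards `p` and then across by conicality gives
`d(F x, F y) ≤ (a - b) R + b ‖u - v‖`, while `‖x - y‖² = (a - b)² + a b ‖u - v‖²`.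
Cauchy–Schwarz in `ℝ²` against the vector `(R, 1)` and `b² ≤ a b` finish the estimate.
-/

open Metric Set

theorem dist_le_iSup_of_dist_le_dist {X Y : Type*} [PseudoMetricSpace X] [PseudoMetricSpace Y]
    {s : Set X} (hs : Bornology.IsBounded s) {f : X → Y}
    (hf : ∀ u ∈ s, ∀ v ∈ s, dist (f u) (f v) ≤ dist u v) (p : Y) {u : X} (hu : u ∈ s) :
    dist p (f u) ≤ ⨆ x : s, dist p (f x) := by
  refine le_ciSup (f := fun x : s => dist p (f x)) ⟨dist p (f u) + diam s, ?_⟩ ⟨u, hu⟩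
  rintro _ ⟨⟨x, hx⟩, rfl⟩
  calc dist p (f x) ≤ dist p (f u) + dist (f u) (f x) := dist_triangle _ _ _
    _ ≤ dist p (f u) + diam s := by
      gcongr
      exact (hf u hu x hx).trans (dist_le_diam_of_mem hs hu hx)

theorem norm_smul_sub_smul_sq {E : Type*} [NormedAddCommGroup E] [InnerProductSpace ℝ E]
    {u v : E} (hu : ‖u‖ = 1) (hv : ‖v‖ = 1) (a b : ℝ) :
    ‖a • u - b • v‖ ^ 2 = (a - b) ^ 2 + a * b * ‖u - v‖ ^ 2 := by
  rw [norm_sub_sq_real, norm_sub_sq_real, real_inner_smul_left, real_inner_smul_right,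
    norm_smul, norm_smul, hu, hv, Real.norm_eq_abs, Real.norm_eq_abs]
  ring_nf
  simp only [sq_abs]
  ring

theorem mul_add_mul_le_sqrt_mul_sqrt (x y z w : ℝ) :
    x * y + z * w ≤ √(x ^ 2 + z ^ 2) * √(y ^ 2 + w ^ 2) := by
  rw [← Real.sqrt_mul (by positivity)]
  refine Real.le_sqrt_of_sq_le ?_
  nlinarith [sq_nonneg (x * w - z * y)]

theorem sub_mul_add_mul_le_sqrt {a b R d : ℝ} (hb : 0 ≤ b) (hba : b ≤ a) :
    (a - b) * R + b * d ≤ √(1 + R ^ 2) * √((a - b) ^ 2 + a * b * d ^ 2) := by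
  calc (a - b) * R + b * d ≤ √((a - b) ^ 2 + (b * d) ^ 2) * √(R ^ 2 + 1) := by
        simpa using mul_add_mul_le_sqrt_mul_sqrt (a - b) R (b * d) 1
    _ ≤ √(1 + R ^ 2) * √((a - b) ^ 2 + a * b * d ^ 2) := by
        rw [mul_comm, add_comm (R ^ 2)]
        gcongr
        nlinarith [mul_nonneg (mul_nonneg hb (sub_nonneg.mpr hba)) (sq_nonneg d)]

section Bicombing

variable {Y : Type*} [PseudoMetricSpace Y] {σ : Y → Y → ℝ → Y}
  (hgeo : ∀ a b, ∀ s ∈ Icc (0 : ℝ) 1, ∀ t ∈ Icc (0 : ℝ) 1,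
    dist (σ a b s) (σ a b t) = |s - t| * dist a b)
  (hcon : ∀ a b a' b', ∀ t ∈ Icc (0 : ℝ) 1,
    dist (σ a b t) (σ a' b' t) ≤ (1 - t) * dist a a' + t * dist b b')
include hgeo hcon

theorem dist_bicombing_le (p w w' : Y) {s t : ℝ} (hs : s ∈ Icc (0 : ℝ) 1)
    (ht : t ∈ Icc (0 : ℝ) 1) :
    dist (σ p w s) (σ p w' t) ≤ |s - t| * dist p w + t * dist w w' := by
  calc dist (σ p w s) (σ p w' t) ≤ dist (σ p w s) (σ p w t) + dist (σ p w t) (σ p w' t) :=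
        dist_triangle _ _ _
    _ ≤ |s - t| * dist p w + ((1 - t) * dist p p + t * dist w w') :=
        add_le_add (hgeo p w s hs t ht).le (hcon p w p w' t ht)
    _ = |s - t| * dist p w + t * dist w w' := by rw [dist_self, mul_zero, zero_add]

theorem dist_bicombing_sphere_le {E : Type*} [NormedAddCommGroup E] [InnerProductSpace ℝ E]
    {g : E → Y} (hg : ∀ u ∈ sphere (0 : E) 1, ∀ v ∈ sphere (0 : E) 1, dist (g u) (g v) ≤ dist u v)
    {p : Y} {R : ℝ} (hR : ∀ u ∈ sphere (0 : E) 1, dist p (g u) ≤ R)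
    {u v : E} (hu : u ∈ sphere (0 : E) 1) (hv : v ∈ sphere (0 : E) 1)
    {a b : ℝ} (ha : a ≤ 1) (hb : 0 ≤ b) (hba : b ≤ a) :
    dist (σ p (g u) a) (σ p (g v) b) ≤ √(1 + R ^ 2) * dist (a • u) (b • v) := by
  calc dist (σ p (g u) a) (σ p (g v) b) ≤ |a - b| * dist p (g u) + b * dist (g u) (g v) :=
        dist_bicombing_le hgeo hcon p _ _ ⟨hb.trans hba, ha⟩ ⟨hb, hba.trans ha⟩
    _ ≤ (a - b) * R + b * ‖u - v‖ := by
        rw [abs_of_nonneg (sub_nonneg.mpr hba), ← dist_eq_norm]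
        exact add_le_add (mul_le_mul_of_nonneg_left (hR u hu) (sub_nonneg.mpr hba))
          (mul_le_mul_of_nonneg_left (hg u hu v hv) hb)
    _ ≤ √(1 + R ^ 2) * √((a - b) ^ 2 + a * b * ‖u - v‖ ^ 2) := sub_mul_add_mul_le_sqrt hb hba
    _ = √(1 + R ^ 2) * dist (a • u) (b • v) := by
        rw [← norm_smul_sub_smul_sq (mem_sphere_zero_iff_norm.mp hu)
          (mem_sphere_zero_iff_norm.mp hv), Real.sqrt_sq (norm_nonneg _), dist_eq_norm]

end Bicombing

theorem conical_extension_lipschitz_general (n : ℕ)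
    {Y : Type*} [MetricSpace Y]
    (σ : Y → Y → ℝ → Y)
    (hσ0 : ∀ a b, σ a b 0 = a)
    (hgeo : ∀ a b, ∀ s ∈ Set.Icc (0 : ℝ) 1, ∀ t ∈ Set.Icc (0 : ℝ) 1,
      dist (σ a b s) (σ a b t) = |s - t| * dist a b)
    (hcon : ∀ a b a' b', ∀ t ∈ Set.Icc (0 : ℝ) 1,
      dist (σ a b t) (σ a' b' t) ≤ (1 - t) * dist a a' + t * dist b b')
    (f : EuclideanSpace ℝ (Fin (n + 1)) → Y)
    (hf : ∀ u ∈ sphere (0 : EuclideanSpace ℝ (Fin (n + 1))) 1,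
      ∀ v ∈ sphere (0 : EuclideanSpace ℝ (Fin (n + 1))) 1,
        dist (f u) (f v) ≤ dist u v)
    (p : Y) (R : ℝ)
    (hR : R = ⨆ x : sphere (0 : EuclideanSpace ℝ (Fin (n + 1))) 1, dist p (f x))
    (F : EuclideanSpace ℝ (Fin (n + 1)) → Y)
    (hF0 : F 0 = p)
    (hFx : ∀ x : EuclideanSpace ℝ (Fin (n + 1)), x ≠ 0 → ‖x‖ ≤ 1 →
      F x = σ p (f (‖x‖⁻¹ • x)) ‖x‖) :
    ∀ x ∈ closedBall (0 : EuclideanSpace ℝ (Fin (n + 1))) 1,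
      ∀ y ∈ closedBall (0 : EuclideanSpace ℝ (Fin (n + 1))) 1,
        dist (F x) (F y) ≤ Real.sqrt (1 + R ^ 2) * dist x y := by
  have hfR : ∀ u ∈ sphere (0 : EuclideanSpace ℝ (Fin (n + 1))) 1, dist p (f u) ≤ R :=
    fun u hu => hR ▸ dist_le_iSup_of_dist_le_dist isBounded_sphere hf p hu
  have hpolar : ∀ x ∈ closedBall (0 : EuclideanSpace ℝ (Fin (n + 1))) 1,
      ∃ u ∈ sphere (0 : EuclideanSpace ℝ (Fin (n + 1))) 1, x = ‖x‖ • u ∧ F x = σ p (f u) ‖x‖ := by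
    intro x hx
    rcases eq_or_ne x 0 with rfl | hx0
    · obtain ⟨u, hu⟩ : (sphere (0 : EuclideanSpace ℝ (Fin (n + 1))) 1).Nonempty :=
        NormedSpace.sphere_nonempty.mpr zero_le_one
      exact ⟨u, hu, by simp, by rw [hF0, norm_zero, hσ0]⟩
    · exact ⟨‖x‖⁻¹ • x, by simpa using norm_smul_inv_norm (𝕜 := ℝ) hx0,
        (smul_inv_smul₀ (norm_ne_zero_iff.mpr hx0) x).symm,
        hFx x hx0 (mem_closedBall_zero_iff.mp hx)⟩
  intro x hx y hy
  wlog hyx : ‖y‖ ≤ ‖x‖ generalizing x y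
  · rw [dist_comm, dist_comm x]
    exact this y hy x hx (le_of_not_ge hyx)
  obtain ⟨u, hu, hxu, hFu⟩ := hpolar x hx
  obtain ⟨v, hv, hyv, hFv⟩ := hpolar y hy
  calc dist (F x) (F y) = dist (σ p (f u) ‖x‖) (σ p (f v) ‖y‖) := by rw [hFu, hFv]
    _ ≤ √(1 + R ^ 2) * dist (‖x‖ • u) (‖y‖ • v) :=
        dist_bicombing_sphere_le hgeo hcon hf hfR hu hv (mem_closedBall_zero_iff.mp hx)
          (norm_nonneg y) hyx
    _ = √(1 + R ^ 2) * dist x y := by rw [← hxu, ← hyv]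

/-- Conical extension: if `σ` is a conical bicombing on `Y`, `f : Sⁿ → Y` is 1-Lipschitz,
`p ∈ Y` and `R = sup_{x ∈ Sⁿ} d(p, f x)`, then the conical extension
`F(x) = σ(p, f(x/|x|), |x|)`, `F(0) = p`, is `√(1+R²)`-Lipschitz on the unit ball. -/
theorem conical_extension_lipschitz (n : ℕ)
    {Y : Type*} [MetricSpace Y]
    (σ : Y → Y → ℝ → Y)
    (hσ0 : ∀ a b, σ a b 0 = a) (hσ1 : ∀ a b, σ a b 1 = b)
    (hgeo : ∀ a b, ∀ s ∈ Set.Icc (0 : ℝ) 1, ∀ t ∈ Set.Icc (0 : ℝ) 1,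
      dist (σ a b s) (σ a b t) = |s - t| * dist a b)
    (hcon : ∀ a b a' b', ∀ t ∈ Set.Icc (0 : ℝ) 1,
      dist (σ a b t) (σ a' b' t) ≤ (1 - t) * dist a a' + t * dist b b')
    (f : EuclideanSpace ℝ (Fin (n + 1)) → Y)
    (hf : ∀ u ∈ sphere (0 : EuclideanSpace ℝ (Fin (n + 1))) 1,
      ∀ v ∈ sphere (0 : EuclideanSpace ℝ (Fin (n + 1))) 1,
        dist (f u) (f v) ≤ dist u v)
    (p : Y) (R : ℝ)
    (hR : R = ⨆ x : sphere (0 : EuclideanSpace ℝ (Fin (n + 1))) 1, dist p (f x))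
    (F : EuclideanSpace ℝ (Fin (n + 1)) → Y)
    (hF0 : F 0 = p)
    (hFx : ∀ x : EuclideanSpace ℝ (Fin (n + 1)), x ≠ 0 → ‖x‖ ≤ 1 →
      F x = σ p (f (‖x‖⁻¹ • x)) ‖x‖) :
    ∀ x ∈ closedBall (0 : EuclideanSpace ℝ (Fin (n + 1))) 1,
      ∀ y ∈ closedBall (0 : EuclideanSpace ℝ (Fin (n + 1))) 1,
        dist (F x) (F y) ≤ Real.sqrt (1 + R ^ 2) * dist x y :=
  conical_extension_lipschitz_general n σ hσ0 hgeo hcon f hf p R hR F hF0 hFx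
end

section
/- Let X be a metric space satisfying Nagata(n, c): for every s > 0 there is a covering of X with s-multiplicity at most n+1 (every subset of diameter < s meets at most n+1 members) whose members have diameter at most c·s. Then for every s > 0, X admits a covering ℬ such that every member has diameter at most 2(c+1)(n+2)·s, and ℬ decomposes as ℬ₁ ∪ ⋯ ∪ ℬ_{n+1} where for each k and any two distinct members B, B' ∈ ℬ_k one has d(B, B') > s. -/
open Metric Set

/-! Take a Nagata cover `A` at scale `T = 2(n+2)s` and a step `σ` with `s < σ` and
`(n+1)σ < (n+2)s`. For a point `x` let `Sₖ(x)` (`membersNear A x (k * σ)`) be the set of members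
of `A` meeting the closed ball of radius `kσ` about `x`. The multiplicity bound gives
`|S_{n+1}(x)| ≤ n+1`, and `S₀(x) ≠ ∅`, so the increasing chain `S₀(x) ⊆ ⋯ ⊆ S_{n+1}(x)` is
stationary at some level `k(x) ≤ n`. Group the points by the pair `(S_{k(x)}(x), k(x))` and color
each group by `k(x)`. Two points of the same level `k` at distance less than `σ` have
`S_k(x) ⊆ S_{k+1}(y) = S_k(y)` and vice versa, so they lie in the same group; and a group is
within `nσ` of one member of `A`, which bounds its diameter.
If `c < 0` the members of the Nagata covers are subsingletons, so `X` has at most `n+1` points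
and is covered by its singletons. -/

section Combinatorics

variable {α : Type*} {m : ℕ}

theorem Set.finite_of_forall_finset_card_le {s : Set α}
    (h : ∀ F : Finset α, ↑F ⊆ s → F.card ≤ m) : s.Finite := by
  by_contra hs
  obtain ⟨F, hFs, hF⟩ := Set.Infinite.exists_subset_card_eq hs (m + 1)
  have := h F hFs
  omega

theorem Set.ncard_le_of_forall_finset_card_le {s : Set α}
    (h : ∀ F : Finset α, ↑F ⊆ s → F.card ≤ m) : s.ncard ≤ m := by
  have hs := Set.finite_of_forall_finset_card_le h
  rw [Set.ncard_eq_toFinset_card s hs]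
  exact h _ (by simp)

theorem nonempty_embedding_fin_of_forall_finset_card_le (h : ∀ F : Finset α, F.card ≤ m) :
    Nonempty (α ↪ Fin m) := by
  have : Finite α := Set.finite_univ_iff.mp (Set.finite_of_forall_finset_card_le fun F _ => h F)
  have := Fintype.ofFinite α
  exact Function.Embedding.nonempty_of_card_le (by simpa using h Finset.univ)

theorem Monotone.exists_lt_eq_succ_of_ncard_le {S : ℕ → Set α} (hS : Monotone S)
    (h₀ : (S 0).Nonempty) (hfin : (S m).Finite) (hcard : (S m).ncard ≤ m) :
    ∃ k < m, S k = S (k + 1) := by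
  by_contra! hne
  have grow : ∀ k ≤ m, k + 1 ≤ (S k).ncard := by
    intro k hk
    induction k with
    | zero => exact (Set.ncard_pos (hfin.subset (hS (Nat.zero_le m)))).mpr h₀
    | succ k ih =>
      have hlt : S k ⊂ S (k + 1) := (hS k.le_succ).ssubset_of_ne (hne k (by omega))
      have := Set.ncard_lt_ncard hlt (hfin.subset (hS hk))
      have := ih (by omega)
      omega
  have := grow m le_rfl
  omega

end Combinatorics

section Coverings

variable {X : Type*} [PseudoMetricSpace X] {ι : Type*}

def CoverMultiplicityLE (A : ι → Set X) (T : ℝ) (m : ℕ) : Prop :=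
  ∀ E : Set X, ediam E < ENNReal.ofReal T →
    ∀ S : Finset ι, (∀ i ∈ S, (E ∩ A i).Nonempty) → S.card ≤ m

def Nagata (X : Type*) [PseudoMetricSpace X] (n : ℕ) (c : ℝ) : Prop :=
  ∀ s : ℝ, 0 < s → ∃ (ι : Type) (B : ι → Set X),
    (⋃ i, B i) = univ ∧ (∀ i, ediam (B i) ≤ ENNReal.ofReal (c * s)) ∧
      CoverMultiplicityLE B s (n + 1)

def HasColoredCovering (X : Type*) [PseudoMetricSpace X] (m : ℕ) (D s : ℝ) : Prop :=
  ∃ (ι : Type) (B : ι → Set X) (color : ι → Fin m),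
    (⋃ i, B i) = univ ∧ (∀ i, ediam (B i) ≤ ENNReal.ofReal D) ∧
      ∀ i j : ι, i ≠ j → color i = color j →
        ∃ s' : ℝ, s < s' ∧ ∀ x ∈ B i, ∀ y ∈ B j, s' ≤ dist x y

variable (A : ι → Set X) in
def membersNear (x : X) (r : ℝ) : Set ι := {i | (closedBall x r ∩ A i).Nonempty}

variable {A : ι → Set X}

theorem monotone_membersNear (x : X) : Monotone (membersNear A x) :=
  fun _ _ hr _ ⟨y, hy, hyA⟩ => ⟨y, closedBall_subset_closedBall hr hy, hyA⟩

theorem membersNear_nonempty (hcov : ⋃ i, A i = univ) (x : X) {r : ℝ} (hr : 0 ≤ r) :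
    (membersNear A x r).Nonempty := by
  obtain ⟨i, hi⟩ := iUnion_eq_univ_iff.mp hcov x
  exact ⟨i, x, mem_closedBall_self hr, hi⟩

theorem membersNear_subset_of_dist_le {x y : X} {r δ : ℝ} (h : dist x y ≤ δ) :
    membersNear A y r ⊆ membersNear A x (r + δ) :=
  fun _ ⟨z, hz, hzA⟩ =>
    ⟨z, closedBall_subset_closedBall' (by rw [dist_comm]; linarith) hz, hzA⟩

theorem edist_le_of_mem_membersNear {x y : X} {r : ℝ} {i : ι} (hx : i ∈ membersNear A x r)
    (hy : i ∈ membersNear A y r) :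
    edist x y ≤ ENNReal.ofReal r + ediam (A i) + ENNReal.ofReal r := by
  obtain ⟨x', hx'r, hx'A⟩ := hx
  obtain ⟨y', hy'r, hy'A⟩ := hy
  have near : ∀ {z z' : X}, z' ∈ closedBall z r → edist z z' ≤ ENNReal.ofReal r :=
    fun hz' => (edist_dist _ _).trans_le (ENNReal.ofReal_le_ofReal (mem_closedBall'.mp hz'))
  calc edist x y ≤ edist x x' + edist x' y' + edist y' y := edist_triangle4 _ _ _ _
    _ ≤ _ := by
      gcongr
      · exact near hx'r
      · exact edist_le_ediam_of_mem hx'A hy'A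
      · rw [edist_comm]; exact near hy'r

theorem ediam_closedBall_le (x : X) (r : ℝ) : ediam (closedBall x r) ≤ ENNReal.ofReal (2 * r) :=
  ediam_le_of_forall_dist_le fun a ha b hb => by
    linarith [dist_triangle_right a b x, mem_closedBall.mp ha, mem_closedBall.mp hb]

theorem CoverMultiplicityLE.finset_card_le {T : ℝ} {m : ℕ} (hmult : CoverMultiplicityLE A T m)
    {x : X} {r : ℝ} (hr : 0 ≤ r) (hrT : 2 * r < T) (F : Finset ι)
    (hF : ↑F ⊆ membersNear A x r) : F.card ≤ m :=
  hmult _ ((ediam_closedBall_le x r).trans_lt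
    ((ENNReal.ofReal_lt_ofReal_iff (by linarith)).mpr hrT)) F hF

end Coverings

section Pieces

variable {X : Type*} [PseudoMetricSpace X] {ι : Type*} {A : ι → Set X} {σ : ℝ} {m : ℕ}

theorem exists_stable_level (hcov : ⋃ i, A i = univ) {T : ℝ}
    (hmult : CoverMultiplicityLE A T (m + 1)) (hσ : 0 ≤ σ) (hσT : 2 * ((m + 1) * σ) < T) :
    ∃ level : X → Fin (m + 1), ∀ x,
      membersNear A x (((level x : ℕ) + 1) * σ) = membersNear A x ((level x : ℕ) * σ) := by
  have hr : (0 : ℝ) ≤ ((m + 1 : ℕ) : ℝ) * σ := by positivity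
  have hrT : 2 * (((m + 1 : ℕ) : ℝ) * σ) < T := by push_cast; exact hσT
  have stable : ∀ x, ∃ k : Fin (m + 1),
      membersNear A x (((k : ℕ) + 1) * σ) = membersNear A x ((k : ℕ) * σ) := by
    intro x
    have hbound := fun F hF => hmult.finset_card_le (x := x) hr hrT F hF
    obtain ⟨k, hk, heq⟩ := Monotone.exists_lt_eq_succ_of_ncard_le
      (S := fun k : ℕ => membersNear A x (k * σ))
      ((monotone_membersNear x).comp fun _ _ h => by gcongr)
      (by simpa using membersNear_nonempty hcov x le_rfl)
      (Set.finite_of_forall_finset_card_le hbound) (Set.ncard_le_of_forall_finset_card_le hbound)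
    exact ⟨⟨k, hk⟩, by simpa using heq.symm⟩
  choose level hlevel using stable
  exact ⟨level, hlevel⟩

variable (A σ)

def coloredPiece (level : X → Fin (m + 1)) (p : Set ι × Fin (m + 1)) : Set X :=
  {x | level x = p.2 ∧ membersNear A x ((level x : ℕ) * σ) = p.1}

variable {A σ}

theorem iUnion_coloredPiece (level : X → Fin (m + 1)) : ⋃ p, coloredPiece A σ level p = univ :=
  eq_univ_of_forall fun x =>
    mem_iUnion.mpr ⟨(membersNear A x ((level x : ℕ) * σ), level x), rfl, rfl⟩

theorem ediam_coloredPiece_le (hcov : ⋃ i, A i = univ) (hσ : 0 ≤ σ) {D : ENNReal}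
    (hD : ∀ i, ediam (A i) ≤ D) (level : X → Fin (m + 1)) (p : Set ι × Fin (m + 1)) :
    ediam (coloredPiece A σ level p) ≤
      ENNReal.ofReal (m * σ) + D + ENNReal.ofReal (m * σ) := by
  refine ediam_le ?_
  rintro a ⟨hak, hap⟩ b ⟨hbk, hbp⟩
  obtain ⟨i, hia⟩ := membersNear_nonempty hcov a (r := (level a : ℕ) * σ) (by positivity)
  have hib : i ∈ membersNear A b ((level b : ℕ) * σ) := hbp ▸ hap ▸ hia
  rw [hbk.trans hak.symm] at hib
  have hlevel : ((level a : ℕ) : ℝ) * σ ≤ m * σ := by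
    gcongr
    exact_mod_cast Nat.lt_succ_iff.mp (level a).isLt
  calc edist a b ≤ _ := edist_le_of_mem_membersNear hia hib
    _ ≤ _ := by gcongr; exact hD i

theorem le_dist_of_mem_coloredPiece {level : X → Fin (m + 1)}
    (hlevel : ∀ x,
      membersNear A x (((level x : ℕ) + 1) * σ) = membersNear A x ((level x : ℕ) * σ))
    {p q : Set ι × Fin (m + 1)} (hpq : p ≠ q) (hcolor : p.2 = q.2) {x y : X}
    (hx : x ∈ coloredPiece A σ level p) (hy : y ∈ coloredPiece A σ level q) :
    σ ≤ dist x y := by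
  by_contra! hxy
  have hxy' : level x = level y := hx.1.trans (hcolor.trans hy.1.symm)
  have absorb : ∀ {u v : X}, dist u v ≤ σ → level u = level v →
      membersNear A v ((level v : ℕ) * σ) ⊆ membersNear A u ((level u : ℕ) * σ) := by
    intro u v huv hl
    rw [← hlevel u, hl, add_one_mul]
    exact membersNear_subset_of_dist_le huv
  have heq : p.1 = q.1 := by
    rw [← hx.2, ← hy.2]
    exact (absorb (by rw [dist_comm]; exact hxy.le) hxy'.symm).antisymm (absorb hxy.le hxy')
  exact hpq (Prod.ext heq hcolor)

end Pieces

theorem CoverMultiplicityLE.finset_card_le_of_subsingleton {X : Type*} [PseudoMetricSpace X]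
    {ι : Type*} {A : ι → Set X} {T : ℝ} {m : ℕ} (hmult : CoverMultiplicityLE A T m)
    (hcov : ⋃ i, A i = univ) (hsub : ∀ i, (A i).Subsingleton) (F : Finset X)
    (hF : ediam (F : Set X) < ENNReal.ofReal T) : F.card ≤ m := by
  classical
  choose g hg using iUnion_eq_univ_iff.mp hcov
  have hinj : Function.Injective g := fun x y h => hsub _ (hg x) (h ▸ hg y)
  rw [← Finset.card_image_of_injective F hinj]
  refine hmult _ hF _ ?_
  simp only [Finset.forall_mem_image]
  exact fun x hx => ⟨x, hx, hg x⟩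

theorem Nagata.nonempty_embedding_fin_of_neg {X : Type*} [MetricSpace X] {n : ℕ} {c : ℝ}
    (hX : Nagata X n c) (hc : c < 0) : Nonempty (X ↪ Fin (n + 1)) := by
  refine nonempty_embedding_fin_of_forall_finset_card_le fun F => ?_
  set t := (ediam (F : Set X)).toReal
  have hF : ediam (F : Set X) < ENNReal.ofReal (t + 1) := by
    rw [ENNReal.lt_ofReal_iff_toReal_lt F.finite_toSet.isBounded.ediam_ne_top]
    linarith
  obtain ⟨ι, A, hcov, hdiam, hmult⟩ := hX (t + 1) (by positivity)
  have hct : c * (t + 1) ≤ 0 := mul_nonpos_of_nonpos_of_nonneg hc.le (by positivity)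
  have hsub : ∀ i, (A i).Subsingleton := fun i => ediam_eq_zero_iff.mp <|
    nonpos_iff_eq_zero.mp <| (hdiam i).trans_eq (ENNReal.ofReal_eq_zero.mpr hct)
  exact hmult.finset_card_le_of_subsingleton hcov hsub F hF

theorem hasColoredCovering_of_embedding {X : Type*} [PseudoMetricSpace X] {m : ℕ}
    (e : X ↪ Fin m) (D s : ℝ) : HasColoredCovering X m D s :=
  ⟨Fin m, fun k => {x | e x = k}, id, iUnion_eq_univ_iff.mpr fun x => ⟨e x, rfl⟩,
    fun _ => (ediam_subsingleton fun _ hx _ hy => e.injective (hx.trans hy.symm)).trans_le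
      zero_le,
    fun _ _ hij h => absurd h hij⟩

/-- Colored coverings from the Nagata condition: if `X` satisfies `Nagata(n, c)`, then for
every `s > 0` there is a covering of `X` by sets of diameter at most `2(c+1)(n+2)·s`
which splits into `n+1` color classes, any two distinct members of the same color being
at distance greater than `s`. -/
theorem colored_covering_of_nagata {X : Type*} [MetricSpace X] (n : ℕ) (c : ℝ)
    (hNagata : ∀ s : ℝ, 0 < s → ∃ (ι : Type) (B : ι → Set X),
      (⋃ i, B i) = Set.univ ∧
      (∀ i, EMetric.diam (B i) ≤ ENNReal.ofReal (c * s)) ∧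
      ∀ E : Set X, EMetric.diam E < ENNReal.ofReal s →
        ∀ S : Finset ι, (∀ i ∈ S, (E ∩ B i).Nonempty) → S.card ≤ n + 1) :
    ∀ s : ℝ, 0 < s → ∃ (ι : Type) (B : ι → Set X) (color : ι → Fin (n + 1)),
      (⋃ i, B i) = Set.univ ∧
      (∀ i, EMetric.diam (B i) ≤ ENNReal.ofReal (2 * (c + 1) * (n + 2) * s)) ∧
      ∀ i j : ι, i ≠ j → color i = color j →
        ∃ s' : ℝ, s < s' ∧ ∀ x ∈ B i, ∀ y ∈ B j, s' ≤ dist x y := by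
  have hX : Nagata X n c := hNagata
  intro s hs
  show HasColoredCovering X (n + 1) (2 * (c + 1) * (n + 2) * s) s
  rcases lt_or_ge c 0 with hc | hc
  · exact hasColoredCovering_of_embedding (hX.nonempty_embedding_fin_of_neg hc).some _ s
  obtain ⟨ι, A, hcov, hdiam, hmult⟩ := hX (2 * (n + 2) * s) (by positivity)
  obtain ⟨σ, hsσ, hσ⟩ : ∃ σ, s < σ ∧ σ < (n + 2) * s / (n + 1) :=
    exists_between ((lt_div_iff₀ (by positivity)).mpr (by nlinarith))
  have hσT : (n + 1) * σ < (n + 2) * s := (lt_div_iff₀' (by positivity)).mp hσ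
  have hσ₀ : 0 ≤ σ := (hs.trans hsσ).le
  obtain ⟨level, hlevel⟩ := exists_stable_level hcov hmult hσ₀ (by linarith)
  refine ⟨Set ι × Fin (n + 1), coloredPiece A σ level, Prod.snd, iUnion_coloredPiece level,
    fun p => ?_, fun p q hpq hcolor =>
      ⟨σ, hsσ, fun x hx y hy => le_dist_of_mem_coloredPiece hlevel hpq hcolor hx hy⟩⟩
  calc ediam (coloredPiece A σ level p)
      ≤ ENNReal.ofReal (n * σ) + ENNReal.ofReal (c * (2 * (n + 2) * s)) +
          ENNReal.ofReal (n * σ) := ediam_coloredPiece_le hcov hσ₀ hdiam level p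
    _ = ENNReal.ofReal (n * σ + c * (2 * (n + 2) * s) + n * σ) := by
      rw [ENNReal.ofReal_add, ENNReal.ofReal_add] <;> positivity
    _ ≤ _ := ENNReal.ofReal_le_ofReal (by nlinarith)
end

section
/- Let Σ be a connected, pure n-dimensional simplicial complex (n ≥ 2) in Σ(I) = {x ∈ ℓ₂(I) : x_i ≥ 0, Σx_i = 1}, equipped with the ℓ₂-metric, with at most N n-simplices. Then Σ is N^{10·log(n)}-quasiconvex: any two points of Σ can be joined by a path in Σ of length at most N^{10·log(n)} times their ℓ₂-distance. -/
/-!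
Let `x ∈ Δ_j`, `y ∈ Δ_k` and `ε = ‖x - y‖`. The coordinates of `x` off `J_k` are at most `ε`,
so `x` has mass at least `1 - (n+1)ε` on the common face `J_j ∩ J_k`, and likewise `y`.
If `(n+1)ε < 1`, renormalising both points onto that face moves each by at most `2(n+1)ε`,
giving a path of length at most `(8(n+1)+1)ε` through the face. Otherwise `ε ≥ 1/(n+1)`,
and connectedness yields a chain of pairwise intersecting simplices, without repetition,
from `Δ_j` to `Δ_k`; walking through it costs at most `2N ≤ 2N(n+1)ε`. Both constants are
at most `N³n³ ≤ N^{10 log n}`, the last inequality being `3 log N + 3 log n ≤ 10 log N log n`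
for `N, n ≥ 2`.
-/

open Set

section PathLength

variable {X : Type*} [PseudoEMetricSpace X]

def JoinedInLengthLE (S : Set X) (x y : X) (L : ℝ) : Prop :=
  ∃ γ : ℝ → X, ContinuousOn γ (Icc 0 1) ∧ γ 0 = x ∧ γ 1 = y ∧
    (∀ t ∈ Icc (0 : ℝ) 1, γ t ∈ S) ∧ eVariationOn γ (Icc 0 1) ≤ ENNReal.ofReal L

variable {S T : Set X} {x y z : X} {L L₁ L₂ : ℝ}

theorem JoinedInLengthLE.mono (h : JoinedInLengthLE S x y L) (hST : S ⊆ T) (hL : L ≤ L₂) :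
    JoinedInLengthLE T x y L₂ := by
  obtain ⟨γ, hγ, h0, h1, hS, hvar⟩ := h
  exact ⟨γ, hγ, h0, h1, fun t ht => hST (hS t ht), hvar.trans (ENNReal.ofReal_le_ofReal hL)⟩

theorem JoinedInLengthLE.trans (h₁ : JoinedInLengthLE S x y L₁) (h₂ : JoinedInLengthLE S y z L₂)
    (hL₁ : 0 ≤ L₁) (hL₂ : 0 ≤ L₂) : JoinedInLengthLE S x z (L₁ + L₂) := by
  obtain ⟨γ₁, hγ₁, h₁0, h₁1, hS₁, hvar₁⟩ := h₁
  obtain ⟨γ₂, hγ₂, h₂0, h₂1, hS₂, hvar₂⟩ := h₂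
  set φ₁ : ℝ → ℝ := fun u => 2 * u
  set φ₂ : ℝ → ℝ := fun u => 2 * u - 1
  set γ : ℝ → X := fun u => if u ≤ 2⁻¹ then γ₁ (φ₁ u) else γ₂ (φ₂ u)
  have hφ₁ : φ₁ '' Icc 0 2⁻¹ = Icc 0 1 := by
    rw [show φ₁ = (2 * ·) from rfl, image_mul_left_Icc' two_pos]; norm_num
  have hφ₂ : φ₂ '' Icc 2⁻¹ 1 = Icc 0 1 := by
    rw [show φ₂ = (2 * · + (-1)) by ext; ring, image_affine_Icc' two_pos]; norm_num
  have hmono₁ : Monotone φ₁ := fun a b hab => by simp only [φ₁]; linarith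
  have hmono₂ : Monotone φ₂ := fun a b hab => by simp only [φ₂]; linarith
  have heq₁ : EqOn γ (γ₁ ∘ φ₁) (Icc 0 2⁻¹) := fun u hu => if_pos hu.2
  have heq₂ : EqOn γ (γ₂ ∘ φ₂) (Icc 2⁻¹ 1) := by
    intro u hu
    rcases hu.1.eq_or_lt with rfl | hlt
    · simp [γ, φ₁, φ₂, h₁1, h₂0]
    · exact if_neg hlt.not_ge
  have hsplit : Icc (0 : ℝ) 1 = Icc 0 2⁻¹ ∪ Icc 2⁻¹ 1 :=
    (Icc_union_Icc_eq_Icc (by norm_num) (by norm_num)).symm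
  refine ⟨γ, ?_, by simp [γ, φ₁, h₁0], by norm_num [γ, φ₂, h₂1], ?_, ?_⟩
  · rw [hsplit]
    refine ContinuousOn.union_of_isClosed ?_ ?_ isClosed_Icc isClosed_Icc
    · exact (hγ₁.comp (by fun_prop) (hφ₁ ▸ mapsTo_image φ₁ _)).congr heq₁
    · exact (hγ₂.comp (by fun_prop) (hφ₂ ▸ mapsTo_image φ₂ _)).congr heq₂
  · rw [hsplit]
    rintro t (ht | ht)
    · exact heq₁ ht ▸ hS₁ _ (hφ₁ ▸ mem_image_of_mem φ₁ ht)
    · exact heq₂ ht ▸ hS₂ _ (hφ₂ ▸ mem_image_of_mem φ₂ ht)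
  · have hvar₁' : eVariationOn γ (Icc 0 2⁻¹) ≤ ENNReal.ofReal L₁ := by
      rwa [eVariationOn.eq_of_eqOn heq₁,
        eVariationOn.comp_eq_of_monotoneOn _ _ (hmono₁.monotoneOn _), hφ₁]
    have hvar₂' : eVariationOn γ (Icc 2⁻¹ 1) ≤ ENNReal.ofReal L₂ := by
      rwa [eVariationOn.eq_of_eqOn heq₂,
        eVariationOn.comp_eq_of_monotoneOn _ _ (hmono₂.monotoneOn _), hφ₂]
    have hadd := eVariationOn.Icc_add_Icc γ (s := univ) (a := 0) (b := 2⁻¹) (c := 1)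
      (by norm_num) (by norm_num) (mem_univ _)
    simp only [univ_inter] at hadd
    rw [← hadd, ENNReal.ofReal_add hL₁ hL₂]
    exact add_le_add hvar₁' hvar₂'

end PathLength

section Segment

variable {E : Type*} [NormedAddCommGroup E] [NormedSpace ℝ E] {S : Set E} {x y : E}

theorem joinedInLengthLE_of_segment_subset (h : segment ℝ x y ⊆ S) :
    JoinedInLengthLE S x y ‖x - y‖ := by
  refine ⟨AffineMap.lineMap x y, (AffineMap.lineMap_continuous).continuousOn, by simp, by simp,
    fun t ht => h ?_, ?_⟩
  · rw [segment_eq_image_lineMap]; exact mem_image_of_mem _ ht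
  · calc eVariationOn (AffineMap.lineMap x y) (Icc (0:ℝ) 1)
        ≤ nndist x y * eVariationOn (id : ℝ → ℝ) (Icc 0 1) :=
          (lipschitzWith_lineMap x y).lipschitzOnWith.comp_eVariationOn_le (mapsTo_id _)
      _ = ENNReal.ofReal ‖x - y‖ := by
          rw [eVariationOn_id_Icc, sub_zero, ENNReal.ofReal_one, mul_one, ← dist_eq_norm,
            ← edist_nndist, edist_dist]

end Segment

section IntersectionGraph

variable {ι X : Type*}

def intersectionGraph (K : ι → Set X) : SimpleGraph ι :=
  SimpleGraph.fromRel fun i j => (K i ∩ K j).Nonempty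

theorem intersectionGraph_adj {K : ι → Set X} {i j : ι} :
    (intersectionGraph K).Adj i j ↔ i ≠ j ∧ (K i ∩ K j).Nonempty := by
  rw [intersectionGraph, SimpleGraph.fromRel_adj, inter_comm (K j), or_self]

/-- The union of the `K c` with `c` in the component of `a` and that of the others are closed
and cover; connectedness forces them to meet, giving an edge out of the component. -/
theorem intersectionGraph_reachable [TopologicalSpace X] [Finite ι] {K : ι → Set X}
    (hK : ∀ i, IsClosed (K i)) (hconn : IsPreconnected (⋃ i, K i)) {a b : ι}
    (ha : (K a).Nonempty) (hb : (K b).Nonempty) : (intersectionGraph K).Reachable a b := by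
  by_contra hab
  set R := {c | (intersectionGraph K).Reachable a c}
  have hclosed : ∀ R' : Set ι, IsClosed (⋃ c ∈ R', K c) :=
    fun R' => (toFinite R').isClosed_biUnion fun c _ => hK c
  have hcover : ⋃ i, K i ⊆ (⋃ c ∈ R, K c) ∪ ⋃ c ∈ Rᶜ, K c := by
    intro z hz
    obtain ⟨c, hc⟩ := mem_iUnion.1 hz
    by_cases hcR : c ∈ R
    exacts [Or.inl (mem_biUnion hcR hc), Or.inr (mem_biUnion hcR hc)]
  obtain ⟨z, -, hzR, hzRc⟩ :=
    isPreconnected_closed_iff.1 hconn _ _ (hclosed R) (hclosed Rᶜ) hcover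
    (ha.imp fun z hz => ⟨mem_iUnion_of_mem a hz, mem_biUnion (SimpleGraph.Reachable.refl a) hz⟩)
    (hb.imp fun z hz => ⟨mem_iUnion_of_mem b hz, mem_biUnion (show b ∈ Rᶜ from hab) hz⟩)
  obtain ⟨c, hcR, hzc⟩ := mem_iUnion₂.1 hzR
  obtain ⟨d, hdR, hzd⟩ := mem_iUnion₂.1 hzRc
  have hcd : (intersectionGraph K).Adj c d :=
    intersectionGraph_adj.2 ⟨fun h => hdR (h ▸ hcR), z, hzc, hzd⟩
  exact hdR (SimpleGraph.Reachable.trans hcR hcd.reachable)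

end IntersectionGraph

section ConvexChain

variable {ι E : Type*} [NormedAddCommGroup E] [NormedSpace ℝ E] {K : ι → Set E} {D : ℝ}

theorem joinedInLengthLE_of_walk (hconv : ∀ i, Convex ℝ (K i))
    (hdiam : ∀ i, ∀ u ∈ K i, ∀ v ∈ K i, ‖u - v‖ ≤ D) {a b : ι}
    (w : (intersectionGraph K).Walk a b) {u v : E} (hu : u ∈ K a) (hv : v ∈ K b) :
    JoinedInLengthLE (⋃ i, K i) u v (D * (w.length + 1)) := by
  induction w generalizing u with
  | nil =>
    refine (joinedInLengthLE_of_segment_subset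
      (((hconv _).segment_subset hu hv).trans (subset_iUnion K _))).mono subset_rfl ?_
    simpa using hdiam _ u hu v hv
  | @cons a c b hadj w ih =>
    obtain ⟨z, hza, hzc⟩ := (intersectionGraph_adj.1 hadj).2
    have hD : 0 ≤ D := (norm_nonneg _).trans (hdiam _ u hu u hu)
    refine ((joinedInLengthLE_of_segment_subset
      (((hconv a).segment_subset hu hza).trans (subset_iUnion K a))).trans (ih hzc hv)
      (norm_nonneg _) (by positivity)).mono subset_rfl ?_
    rw [SimpleGraph.Walk.length_cons, Nat.cast_succ]
    linarith [hdiam a u hu z hza]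

theorem joinedInLengthLE_iUnion_of_isPreconnected [Fintype ι] (hK : ∀ i, IsClosed (K i))
    (hconv : ∀ i, Convex ℝ (K i)) (hdiam : ∀ i, ∀ u ∈ K i, ∀ v ∈ K i, ‖u - v‖ ≤ D)
    (hconn : IsPreconnected (⋃ i, K i)) {u v : E} (hu : u ∈ ⋃ i, K i) (hv : v ∈ ⋃ i, K i) :
    JoinedInLengthLE (⋃ i, K i) u v (D * Fintype.card ι) := by
  classical
  obtain ⟨a, hua⟩ := mem_iUnion.1 hu
  obtain ⟨b, hvb⟩ := mem_iUnion.1 hv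
  obtain ⟨w⟩ := intersectionGraph_reachable hK hconn ⟨u, hua⟩ ⟨v, hvb⟩
  have hD : 0 ≤ D := (norm_nonneg _).trans (hdiam a u hua u hua)
  have hlen : (w.toPath.1.length : ℝ) + 1 ≤ Fintype.card ι := by
    exact_mod_cast w.toPath.2.length_lt
  exact (joinedInLengthLE_of_walk hconv hdiam w.toPath.1 hua hvb).mono subset_rfl (by gcongr)

end ConvexChain

theorem lp.sum_single_apply {α : Type*} [DecidableEq α] {E : α → Type*}
    [∀ i, NormedAddCommGroup (E i)] {p : ENNReal} (T : Finset α) (f : ∀ i, E i) (j : α) :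
    (∑ i ∈ T, lp.single p i (f i)) j = if j ∈ T then f j else 0 := by
  simp only [lp.coeFn_sum, Finset.sum_apply, lp.coeFn_single, Finset.sum_pi_single]

theorem lp.norm_le_sum_norm_of_forall_notMem_eq_zero {α : Type*} {E : α → Type*}
    [∀ i, NormedAddCommGroup (E i)] {p : ENNReal} [Fact (1 ≤ p)] {f : lp E p} {T : Finset α}
    (hf : ∀ i ∉ T, f i = 0) : ‖f‖ ≤ ∑ i ∈ T, ‖f i‖ := by
  classical
  have hsum : f = ∑ i ∈ T, lp.single p i (f i) := by
    ext j
    rw [lp.sum_single_apply]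
    split_ifs with hj
    · rfl
    · exact hf j hj
  have hp : 0 < p := zero_lt_one.trans_le Fact.out
  calc ‖f‖ = ‖∑ i ∈ T, lp.single p i (f i)‖ := congrArg _ hsum
    _ ≤ ∑ i ∈ T, ‖lp.single p i (f i)‖ := norm_sum_le _ _
    _ = ∑ i ∈ T, ‖f i‖ := by simp only [lp.norm_single hp]

section LpSimplex

variable {I : Type*}

local notation "ℓ²(" I ")" => lp (fun _ : I => ℝ) 2

def lpSimplex (T : Finset I) : Set ℓ²(I) :=
  {x | (∀ i, 0 ≤ x i) ∧ HasSum (fun i => x i) 1 ∧ ∑ j ∈ T, x j = 1}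

variable {T U F : Finset I} {x y : ℓ²(I)}

theorem mem_lpSimplex_iff :
    x ∈ lpSimplex T ↔ (∀ i, 0 ≤ x i) ∧ (∀ i ∉ T, x i = 0) ∧ ∑ i ∈ T, x i = 1 := by
  classical
  refine ⟨fun ⟨hnonneg, hsum, hT⟩ => ⟨hnonneg, fun i hi => ?_, hT⟩,
    fun ⟨hnonneg, hzero, hT⟩ => ⟨hnonneg, hT ▸ hasSum_sum_of_ne_finset_zero hzero, hT⟩⟩
  have h := sum_le_hasSum (insert i T) (fun j _ => hnonneg j) hsum
  rw [Finset.sum_insert hi, hT] at h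
  exact le_antisymm (by linarith) (hnonneg i)

theorem lpSimplex_mono (h : T ⊆ U) : lpSimplex T ⊆ lpSimplex U := by
  intro x hx
  obtain ⟨hnonneg, hzero, hT⟩ := mem_lpSimplex_iff.1 hx
  refine ⟨hnonneg, hx.2.1, ?_⟩
  rwa [← Finset.sum_subset h fun i _ hi => hzero i hi]

theorem convex_lpSimplex (T : Finset I) : Convex ℝ (lpSimplex T) := by
  rintro x ⟨hx₀, hx₁, hxT⟩ y ⟨hy₀, hy₁, hyT⟩ a b ha hb hab
  have happly : ∀ i, (a • x + b • y) i = a * x i + b * y i := fun i => rfl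
  refine ⟨fun i => ?_, ?_, ?_⟩
  · rw [happly]; exact add_nonneg (mul_nonneg ha (hx₀ i)) (mul_nonneg hb (hy₀ i))
  · simpa only [happly, mul_one, hab] using (hx₁.mul_left a).add (hy₁.mul_left b)
  · simp only [happly, Finset.sum_add_distrib, ← Finset.mul_sum, hxT, hyT, mul_one, hab]

theorem isClosed_lpSimplex (T : Finset I) : IsClosed (lpSimplex T) := by
  have hcont : ∀ i, Continuous fun x : ℓ²(I) => x i := fun i =>
    (continuous_apply i).comp lp.uniformContinuous_coe.continuous
  have heq : lpSimplex T = (⋂ i, {x : ℓ²(I) | 0 ≤ x i}) ∩ (⋂ i ∉ T, {x | x i = 0}) ∩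
      {x | ∑ i ∈ T, x i = 1} := by
    ext x
    simp only [mem_lpSimplex_iff, mem_inter_iff, mem_iInter, mem_ofPred_eq, and_assoc]
  rw [heq]
  refine ((isClosed_iInter fun i => isClosed_le continuous_const (hcont i)).inter
    (isClosed_biInter fun i _ => isClosed_eq (hcont i) continuous_const)).inter
    (isClosed_eq (continuous_finsetSum _ fun i _ => hcont i) continuous_const)

theorem norm_le_one_of_mem_lpSimplex (hx : x ∈ lpSimplex T) : ‖x‖ ≤ 1 := by
  obtain ⟨hnonneg, hzero, hT⟩ := mem_lpSimplex_iff.1 hx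
  calc ‖x‖ ≤ ∑ i ∈ T, ‖x i‖ := lp.norm_le_sum_norm_of_forall_notMem_eq_zero hzero
    _ = 1 := by simp only [Real.norm_of_nonneg (hnonneg _), hT]

theorem norm_sub_le_two_of_mem_lpSimplex (hx : x ∈ lpSimplex T) (hy : y ∈ lpSimplex T) :
    ‖x - y‖ ≤ 2 := by
  linarith [norm_sub_le x y, norm_le_one_of_mem_lpSimplex hx, norm_le_one_of_mem_lpSimplex hy]

/-- With `s` the mass of `x` on `F`, renormalising `x` onto `F` moves it by `(1 - s) + (s⁻¹ - 1) s`
in `ℓ¹`, which dominates `ℓ²`. -/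
theorem exists_mem_lpSimplex_face_norm_sub_le (hF : F ⊆ T) (hx : x ∈ lpSimplex T)
    (hpos : 0 < ∑ i ∈ F, x i) :
    ∃ x' ∈ lpSimplex F, ‖x - x'‖ ≤ 2 * (1 - ∑ i ∈ F, x i) := by
  classical
  obtain ⟨hnonneg, hzero, hT⟩ := mem_lpSimplex_iff.1 hx
  set s := ∑ i ∈ F, x i
  set x' : ℓ²(I) := ∑ i ∈ F, lp.single 2 i (x i / s)
  have hx' : ∀ j, x' j = if j ∈ F then x j / s else 0 := lp.sum_single_apply F _
  refine ⟨x', mem_lpSimplex_iff.2 ⟨fun j => ?_, fun j hj => ?_, ?_⟩, ?_⟩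
  · rw [hx']; split_ifs
    exacts [div_nonneg (hnonneg j) hpos.le, le_rfl]
  · rw [hx', if_neg hj]
  · rw [Finset.sum_congr rfl fun j hj => (hx' j).trans (if_pos hj), ← Finset.sum_div,
      div_self hpos.ne']
  have hs : s ≤ 1 := hT ▸ Finset.sum_le_sum_of_subset_of_nonneg hF fun i _ _ => hnonneg i
  have hdiff : ∀ j, (x - x') j = x j - x' j := fun j => rfl
  calc ‖x - x'‖ ≤ ∑ j ∈ T, ‖(x - x') j‖ := lp.norm_le_sum_norm_of_forall_notMem_eq_zero
        fun j hj => by rw [hdiff, hx', if_neg fun h => hj (hF h), hzero j hj, sub_zero]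
    _ = ∑ j ∈ T \ F, x j + ∑ j ∈ F, (x j / s - x j) := by
        rw [← Finset.sum_sdiff hF]
        congr 1 <;> refine Finset.sum_congr rfl fun j hj => ?_
        · rw [hdiff, hx', if_neg (Finset.mem_sdiff.1 hj).2, sub_zero,
            Real.norm_of_nonneg (hnonneg j)]
        · have hle : x j ≤ x j / s := le_div_self (hnonneg j) hpos hs
          rw [hdiff, hx', if_pos hj, Real.norm_eq_abs, abs_sub_comm,
            abs_of_nonneg (by linarith)]
    _ = 2 * (1 - s) := by
        have hsplit := Finset.sum_sdiff (f := fun j => x j) hF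
        rw [Finset.sum_sub_distrib, ← Finset.sum_div, div_self hpos.ne']
        linarith

section Face

variable [DecidableEq I]

theorem one_sub_sum_inter_le_card_mul_norm_sub (hx : x ∈ lpSimplex T) (hy : y ∈ lpSimplex U) :
    1 - ∑ i ∈ T ∩ U, x i ≤ T.card * ‖x - y‖ := by
  obtain ⟨-, -, hxT⟩ := mem_lpSimplex_iff.1 hx
  obtain ⟨-, hy₀, -⟩ := mem_lpSimplex_iff.1 hy
  have hcoord : ∀ i ∈ T \ (T ∩ U), x i ≤ ‖x - y‖ := fun i hi => by
    obtain ⟨hiT, hiTU⟩ := Finset.mem_sdiff.1 hi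
    have hiU : i ∉ U := fun h => hiTU (Finset.mem_inter.2 ⟨hiT, h⟩)
    calc x i = (x - y) i := by rw [lp.coeFn_sub, Pi.sub_apply, hy₀ i hiU, sub_zero]
      _ ≤ ‖(x - y) i‖ := Real.le_norm_self _
      _ ≤ ‖x - y‖ := lp.norm_apply_le_norm two_ne_zero _ i
  have hsplit := Finset.sum_sdiff (f := fun i => x i) (Finset.inter_subset_left (s₁ := T) (s₂ := U))
  calc 1 - ∑ i ∈ T ∩ U, x i = ∑ i ∈ T \ (T ∩ U), x i := by linarith
    _ ≤ (T \ (T ∩ U)).card * ‖x - y‖ := by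
        simpa only [nsmul_eq_mul] using Finset.sum_le_card_nsmul _ _ _ hcoord
    _ ≤ T.card * ‖x - y‖ := by gcongr; exact Finset.sdiff_subset

theorem joinedInLengthLE_lpSimplex_union {m : ℕ} (hx : x ∈ lpSimplex T) (hy : y ∈ lpSimplex U)
    (hT : T.card ≤ m) (hU : U.card ≤ m) (hclose : m * ‖x - y‖ < 1) :
    JoinedInLengthLE (lpSimplex T ∪ lpSimplex U) x y ((8 * m + 1) * ‖x - y‖) := by
  have hTm : (T.card : ℝ) * ‖x - y‖ ≤ m * ‖x - y‖ := by gcongr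
  have hUm : (U.card : ℝ) * ‖y - x‖ ≤ m * ‖x - y‖ := by rw [norm_sub_rev]; gcongr
  have hxF := one_sub_sum_inter_le_card_mul_norm_sub hx hy
  have hyF := one_sub_sum_inter_le_card_mul_norm_sub hy hx
  rw [Finset.inter_comm] at hyF
  obtain ⟨x', hx'F, hxx'⟩ :=
    exists_mem_lpSimplex_face_norm_sub_le Finset.inter_subset_left hx (by linarith)
  obtain ⟨y', hy'F, hyy'⟩ :=
    exists_mem_lpSimplex_face_norm_sub_le Finset.inter_subset_right hy (by linarith)
  have hx'T := lpSimplex_mono Finset.inter_subset_left hx'F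
  have hy'T := lpSimplex_mono Finset.inter_subset_left hy'F
  have hy'U := lpSimplex_mono Finset.inter_subset_right hy'F
  have hpath := (joinedInLengthLE_of_segment_subset
    (((convex_lpSimplex T).segment_subset hx hx'T).trans subset_union_left)).trans
    ((joinedInLengthLE_of_segment_subset
      (((convex_lpSimplex T).segment_subset hx'T hy'T).trans subset_union_left)).trans
      (joinedInLengthLE_of_segment_subset
        (((convex_lpSimplex U).segment_subset hy'U hy).trans subset_union_right))
      (norm_nonneg _) (norm_nonneg _)) (norm_nonneg _) (by positivity)
  refine hpath.mono subset_rfl ?_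
  have hx'y' := dist_triangle4 x' x y y'
  simp only [dist_eq_norm, norm_sub_rev x' x] at hx'y'
  rw [norm_sub_rev y']
  linarith

end Face

theorem joinedInLengthLE_iUnion_lpSimplex {ι : Type*} [Fintype ι] {J : ι → Finset I} {m : ℕ}
    (hJ : ∀ k, (J k).card ≤ m) (hconn : IsPreconnected (⋃ k, lpSimplex (J k)))
    (hx : x ∈ ⋃ k, lpSimplex (J k)) (hy : y ∈ ⋃ k, lpSimplex (J k)) :
    JoinedInLengthLE (⋃ k, lpSimplex (J k)) x y
      (max (8 * (m : ℝ) + 1) (2 * Fintype.card ι * m) * ‖x - y‖) := by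
  classical
  by_cases hclose : m * ‖x - y‖ < 1
  · obtain ⟨j, hxj⟩ := mem_iUnion.1 hx
    obtain ⟨k, hyk⟩ := mem_iUnion.1 hy
    exact (joinedInLengthLE_lpSimplex_union hxj hyk (hJ j) (hJ k) hclose).mono
      (union_subset (subset_iUnion (fun k => lpSimplex (J k)) j)
        (subset_iUnion (fun k => lpSimplex (J k)) k)) (by gcongr; exact le_max_left _ _)
  · refine (joinedInLengthLE_iUnion_of_isPreconnected (fun k => isClosed_lpSimplex _)
      (fun k => convex_lpSimplex _) (fun k _ hu _ hv => norm_sub_le_two_of_mem_lpSimplex hu hv)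
      hconn hx hy).mono subset_rfl ?_
    calc 2 * (Fintype.card ι : ℝ) ≤ 2 * Fintype.card ι * (m * ‖x - y‖) :=
          le_mul_of_one_le_right (by positivity) (not_lt.1 hclose)
      _ = 2 * Fintype.card ι * m * ‖x - y‖ := by ring
      _ ≤ _ := by gcongr; exact le_max_right _ _

end LpSimplex

theorem pow_three_mul_pow_three_le_rpow_ten_mul_log {a b : ℝ} (ha : 2 ≤ a) (hb : 2 ≤ b) :
    a ^ 3 * b ^ 3 ≤ a ^ (10 * Real.log b) := by
  have hlog2 := Real.log_two_gt_d9
  have hla := Real.log_le_log two_pos ha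
  have hlb := Real.log_le_log two_pos hb
  rw [Real.rpow_def_of_pos (by linarith), ← Real.exp_log (by positivity : 0 < a ^ 3 * b ^ 3),
    Real.exp_le_exp, Real.log_mul (by positivity) (by positivity), Real.log_pow, Real.log_pow]
  push_cast
  nlinarith

theorem max_le_rpow_ten_mul_log {a b : ℝ} (ha : 2 ≤ a) (hb : 2 ≤ b) :
    max (8 * (b + 1) + 1) (2 * a * (b + 1)) ≤ a ^ (10 * Real.log b) := by
  have hcube : ∀ c : ℝ, 2 ≤ c → 4 * c ≤ c ^ 3 := fun c hc => by
    nlinarith [mul_le_mul_of_nonneg_left (pow_le_pow_left₀ zero_le_two hc 2) (by linarith : 0 ≤ c)]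
  have hprod := mul_le_mul (hcube a ha) (hcube b hb) (by positivity) (by positivity)
  calc max (8 * (b + 1) + 1) (2 * a * (b + 1)) ≤ a ^ 3 * b ^ 3 :=
        max_le (by nlinarith) (by nlinarith)
    _ ≤ _ := pow_three_mul_pow_three_le_rpow_ten_mul_log ha hb

theorem simplicial_complex_quasiconvex_general {I : Type*} (n N : ℕ) (hn : 2 ≤ n)
    (J : Fin N → Finset I) (hJ : ∀ k, (J k).card = n + 1)
    (Δ : Fin N → Set (lp (fun _ : I => ℝ) 2))
    (hΔ : ∀ k, Δ k = {x | (∀ i, 0 ≤ x i) ∧ HasSum (fun i => x i) 1 ∧ ∑ j ∈ J k, x j = 1})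
    (Sig : Set (lp (fun _ : I => ℝ) 2)) (hSig : Sig = ⋃ k, Δ k)
    (hconn : IsPathConnected Sig) :
    ∀ x ∈ Sig, ∀ y ∈ Sig, ∃ γ : ℝ → lp (fun _ : I => ℝ) 2,
      ContinuousOn γ (Set.Icc 0 1) ∧ γ 0 = x ∧ γ 1 = y ∧
      (∀ t ∈ Set.Icc (0 : ℝ) 1, γ t ∈ Sig) ∧
      eVariationOn γ (Set.Icc 0 1) ≤
        ENNReal.ofReal ((N : ℝ) ^ (10 * Real.log n) * ‖x - y‖) := by
  obtain rfl : Δ = fun k => lpSimplex (J k) := funext hΔ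
  subst hSig
  intro x hx y hy
  obtain ⟨j, hxj⟩ := mem_iUnion.1 hx
  obtain ⟨k, hyk⟩ := mem_iUnion.1 hy
  rcases eq_or_ne j k with rfl | hjk
  · refine (joinedInLengthLE_of_segment_subset ((convex_lpSimplex _).segment_subset hxj hyk)).mono
      (subset_iUnion (fun k => lpSimplex (J k)) j) (le_mul_of_one_le_left (norm_nonneg _) ?_)
    exact Real.one_le_rpow (by exact_mod_cast j.pos) (by positivity)
  have hN : (2 : ℝ) ≤ N := by
    have := Fin.val_ne_of_ne hjk
    exact_mod_cast (show 2 ≤ N by omega)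
  have hn' : (2 : ℝ) ≤ n := by exact_mod_cast hn
  refine (joinedInLengthLE_iUnion_lpSimplex (fun k => (hJ k).le)
    hconn.isConnected.isPreconnected hx hy).mono subset_rfl ?_
  gcongr
  rw [Fintype.card_fin]
  push_cast
  exact max_le_rpow_ten_mul_log hN hn'

/-- A connected pure `n`-dimensional simplicial complex (`n ≥ 2`) in
`Σ(I) ⊆ ℓ₂(I)` with at most `N` `n`-simplices, equipped with the `ℓ₂`-metric, is
`N^{10·log n}`-quasiconvex: any two of its points are joined by a path inside the
complex of length at most `N^{10·log n}` times their distance. -/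
theorem simplicial_complex_quasiconvex {I : Type*} (n N : ℕ) (hn : 2 ≤ n) (hN : 1 ≤ N)
    (J : Fin N → Finset I) (hJ : ∀ k, (J k).card = n + 1)
    (Δ : Fin N → Set (lp (fun _ : I => ℝ) 2))
    (hΔ : ∀ k, Δ k = {x | (∀ i, 0 ≤ x i) ∧ HasSum (fun i => x i) 1 ∧ ∑ j ∈ J k, x j = 1})
    (Sig : Set (lp (fun _ : I => ℝ) 2)) (hSig : Sig = ⋃ k, Δ k)
    (hconn : IsPathConnected Sig) :
    ∀ x ∈ Sig, ∀ y ∈ Sig, ∃ γ : ℝ → lp (fun _ : I => ℝ) 2,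
      ContinuousOn γ (Set.Icc 0 1) ∧ γ 0 = x ∧ γ 1 = y ∧
      (∀ t ∈ Set.Icc (0 : ℝ) 1, γ t ∈ Sig) ∧
      eVariationOn γ (Set.Icc 0 1) ≤
        ENNReal.ofReal ((N : ℝ) ^ (10 * Real.log n) * ‖x - y‖) :=
  simplicial_complex_quasiconvex_general n N hn J hJ Δ hΔ Sig hSig hconn
end
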